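/- arXiv:2006.03213 — 7 statements merged into one kernel-verified Lean document; each statement's English description precedes it below -/
import Mathlib

section
/- Let G = (V,E) be a graph on n nodes (n even) with a planted bisection V1, V2 (|V1| = |V2| = n/2), and let d_in, d_out be its intra- and inter-cluster connectivity parameters. If d_in − d_out > n/4 − 1, then the planted bisection is the unique bisection of V of minimum cost; i.e., the minimum bisection problem recovers the planted bisection. -/
noncomputable section
open scoped Classical

/-- The cost of the bisection `(S, Sᶜ)` of the node set of `G`, i.e. the number of
edges of `G` with one endpoint in `S` and the other outside of `S`; each such edge
is counted once, as the ordered pair whose first component lies in `S`. -/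
def cutCost {n : ℕ} (G : SimpleGraph (Fin n)) (S : Finset (Fin n)) : ℕ :=
  ((Finset.univ : Finset (Fin n × Fin n)).filter
    (fun p => G.Adj p.1 p.2 ∧ p.1 ∈ S ∧ p.2 ∉ S)).card

/-- The degree of `v` in the graph `G[S] ∪ G[Sᶜ]`, i.e. the number of neighbors of
`v` lying on the same side of the bisection `(S, Sᶜ)` as `v`. -/
def sameDeg {n : ℕ} (G : SimpleGraph (Fin n)) (S : Finset (Fin n)) (v : Fin n) : ℕ :=
  ((Finset.univ : Finset (Fin n)).filter (fun w => G.Adj v w ∧ (w ∈ S ↔ v ∈ S))).card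

/-- The degree of `v` in the graph `G₀` of edges crossing the bisection `(S, Sᶜ)`,
i.e. the number of neighbors of `v` lying on the other side of the bisection. -/
def crossDeg {n : ℕ} (G : SimpleGraph (Fin n)) (S : Finset (Fin n)) (v : Fin n) : ℕ :=
  ((Finset.univ : Finset (Fin n)).filter (fun w => G.Adj v w ∧ ¬ (w ∈ S ↔ v ∈ S))).card

/-!
Let `P` be the planted side and `S` another bisection, and write `B = P \ S`, `C = S \ P`,
both of size `m ≥ 1`. Then `cut S - cut P = (e(P ∩ S, B) - e(P ∩ S, C)) + (e(D, C) - e(D, B))`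
with `D = Pᶜ ∩ Sᶜ`. A vertex of `B` has at least `d_in` neighbours in `P`, at most `m - 1` of
them in `B`, so `e(P ∩ S, B) ≥ m (d_in - m + 1)`, whereas `e(P ∩ S, C) ≤ m d_out`; hence the
first bracket is positive as soon as `d_in - d_out ≥ m`, and the second one is the first for the
complementary pair `(Pᶜ, Sᶜ)`. Replacing `S` by `Sᶜ` if necessary, `m ≤ n / 4`, which is where
the hypothesis `d_in - d_out > n / 4 - 1` enters.
-/

open Finset

namespace SimpleGraph

variable {V : Type*} (G : SimpleGraph V) [DecidableRel G.Adj]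

lemma card_interedges_eq_sum (s t : Finset V) :
    #(G.interedges s t) = ∑ v ∈ s, #{w ∈ t | G.Adj v w} := by
  rw [interedges_def, card_filter, sum_product]
  simp only [card_filter]

lemma card_interedges_comm (s t : Finset V) :
    #(G.interedges s t) = #(G.interedges t s) :=
  have := G.symm
  Rel.card_interedges_comm s t

lemma card_interedges_self_add_card_le (s : Finset V) :
    #(G.interedges s s) + #s ≤ #s * #s := by
  have hsub : G.interedges s s ⊆ s.offDiag := fun e he => by
    rw [mem_interedges_iff] at he
    exact mem_offDiag.2 ⟨he.1, he.2.1, he.2.2.ne⟩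
  have hoff := card_le_card hsub
  rw [offDiag_card] at hoff
  have := Nat.le_mul_self #s
  omega

variable [DecidableEq V]

lemma card_interedges_union_left {s₁ s₂ : Finset V} (h : Disjoint s₁ s₂) (t : Finset V) :
    #(G.interedges (s₁ ∪ s₂) t) = #(G.interedges s₁ t) + #(G.interedges s₂ t) := by
  rw [card_interedges_eq_sum, sum_union h, card_interedges_eq_sum, card_interedges_eq_sum]

lemma card_interedges_union_right (s : Finset V) {t₁ t₂ : Finset V} (h : Disjoint t₁ t₂) :
    #(G.interedges s (t₁ ∪ t₂)) = #(G.interedges s t₁) + #(G.interedges s t₂) := by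
  rw [card_interedges_comm, card_interedges_union_left _ h, card_interedges_comm,
    card_interedges_comm _ t₂]

lemma card_interedges_exchange {A B C D : Finset V} (hAB : Disjoint A B) (hAC : Disjoint A C)
    (hBD : Disjoint B D) (hCD : Disjoint C D) :
    #(G.interedges (A ∪ C) (B ∪ D)) + #(G.interedges A C) + #(G.interedges D B) =
      #(G.interedges (A ∪ B) (C ∪ D)) + #(G.interedges A B) + #(G.interedges D C) := by
  rw [card_interedges_union_left _ hAC, card_interedges_union_right _ _ hBD,
    card_interedges_union_right _ _ hBD, card_interedges_union_left _ hAB,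
    card_interedges_union_right _ _ hCD, card_interedges_union_right _ _ hCD]
  have := G.card_interedges_comm C B
  have := G.card_interedges_comm D B
  have := G.card_interedges_comm D C
  omega

lemma card_interedges_inter_sdiff_lt {P S : Finset V} {din dout : ℕ}
    (hin : ∀ v ∈ P \ S, din ≤ #{w ∈ P | G.Adj v w})
    (hout : ∀ v ∈ S \ P, #{w ∈ P | G.Adj v w} ≤ dout)
    (hcard : #(S \ P) ≤ #(P \ S)) (hne : (P \ S).Nonempty) (hgap : dout + #(P \ S) ≤ din) :
    #(G.interedges (P ∩ S) (S \ P)) < #(G.interedges (P ∩ S) (P \ S)) := by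
  have hlower :
      #(P \ S) * din ≤ #(G.interedges (P \ S) (P ∩ S)) + #(G.interedges (P \ S) (P \ S)) :=
    calc #(P \ S) * din ≤ ∑ v ∈ P \ S, #{w ∈ P | G.Adj v w} := by
          simpa using card_nsmul_le_sum _ _ _ hin
      _ = #(G.interedges (P \ S) P) := (card_interedges_eq_sum ..).symm
      _ = _ := by
          rw [← card_interedges_union_right _ _ (disjoint_sdiff_inter P S).symm, union_comm,
            sdiff_union_inter]
  have hupper : #(G.interedges (S \ P) (P ∩ S)) ≤ #(P \ S) * dout :=
    calc #(G.interedges (S \ P) (P ∩ S)) ≤ #(G.interedges (S \ P) P) :=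
          card_le_card (interedges_mono _ subset_rfl inter_subset_left)
      _ = ∑ v ∈ S \ P, #{w ∈ P | G.Adj v w} := card_interedges_eq_sum ..
      _ ≤ #(S \ P) * dout := by simpa using sum_le_card_nsmul _ _ _ hout
      _ ≤ #(P \ S) * dout := Nat.mul_le_mul_right _ hcard
  have hself := G.card_interedges_self_add_card_le (P \ S)
  have hscaled := Nat.mul_le_mul_left #(P \ S) hgap
  have hm := hne.card_pos
  rw [mul_add] at hscaled
  rw [card_interedges_comm, G.card_interedges_comm (P ∩ S)]
  omega

end SimpleGraph

section Bisection

variable {n : ℕ} (G : SimpleGraph (Fin n))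

lemma cutCost_eq_card_interedges (S : Finset (Fin n)) : cutCost G S = #(G.interedges S Sᶜ) := by
  unfold cutCost
  congr 1
  ext ⟨x, y⟩
  simp only [mem_filter, mem_univ, true_and, SimpleGraph.mk_mem_interedges_iff, mem_compl]
  tauto

lemma cutCost_compl (S : Finset (Fin n)) : cutCost G Sᶜ = cutCost G S := by
  rw [cutCost_eq_card_interedges, cutCost_eq_card_interedges, compl_compl,
    G.card_interedges_comm]

lemma sameDeg_compl (P : Finset (Fin n)) : sameDeg G Pᶜ = sameDeg G P := by
  funext v
  unfold sameDeg
  congr 1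
  ext w
  simp only [mem_filter, mem_univ, true_and, mem_compl, not_iff_not]

lemma crossDeg_compl (P : Finset (Fin n)) : crossDeg G Pᶜ = crossDeg G P := by
  funext v
  unfold crossDeg
  congr 1
  ext w
  simp only [mem_filter, mem_univ, true_and, mem_compl, not_iff_not]

lemma sameDeg_of_mem {P : Finset (Fin n)} {v : Fin n} (hv : v ∈ P) :
    sameDeg G P v = #{w ∈ P | G.Adj v w} := by
  unfold sameDeg
  congr 1
  ext w
  simp only [mem_filter, mem_univ, true_and, hv, iff_true]
  tauto

lemma crossDeg_of_notMem {P : Finset (Fin n)} {v : Fin n} (hv : v ∉ P) :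
    crossDeg G P v = #{w ∈ P | G.Adj v w} := by
  unfold crossDeg
  congr 1
  ext w
  simp only [mem_filter, mem_univ, true_and, hv, iff_false, not_not]
  tauto

theorem cutCost_lt_cutCost {P S : Finset (Fin n)} {din dout : ℕ}
    (hin : ∀ v, din ≤ sameDeg G P v) (hout : ∀ v, crossDeg G P v ≤ dout)
    (hcard : #S = #P) (hne : (P \ S).Nonempty) (hgap : dout + #(P \ S) ≤ din) :
    cutCost G P < cutCost G S := by
  have hsdiff : #(S \ P) = #(P \ S) := card_sdiff_comm hcard
  have hlt := G.card_interedges_inter_sdiff_lt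
    (fun v hv => sameDeg_of_mem G (mem_sdiff.1 hv).1 ▸ hin v)
    (fun v hv => crossDeg_of_notMem G (mem_sdiff.1 hv).2 ▸ hout v) hsdiff.le hne hgap
  have hlt_compl := G.card_interedges_inter_sdiff_lt (P := Pᶜ) (S := Sᶜ)
    (fun v hv => sameDeg_of_mem G (mem_sdiff.1 hv).1 ▸ sameDeg_compl G P ▸ hin v)
    (fun v hv => crossDeg_of_notMem G (mem_sdiff.1 hv).2 ▸ crossDeg_compl G P ▸ hout v)
    (by rw [compl_sdiff_compl, compl_sdiff_compl, hsdiff])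
    (by rw [compl_sdiff_compl, ← card_pos, hsdiff]; exact hne.card_pos)
    (by rwa [compl_sdiff_compl, hsdiff])
  rw [compl_sdiff_compl, compl_sdiff_compl] at hlt_compl
  have hexch := G.card_interedges_exchange (A := P ∩ S) (B := P \ S) (C := S \ P)
    (D := Pᶜ ∩ Sᶜ) (disjoint_sdiff_inter P S).symm (disjoint_sdiff.mono_left inter_subset_left)
    (disjoint_compl_right.mono sdiff_subset inter_subset_left)
    (disjoint_compl_right.mono sdiff_subset inter_subset_right)
  have hS : P ∩ S ∪ S \ P = S := by ext; simp only [mem_union, mem_inter, mem_sdiff]; tauto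
  have hSc : P \ S ∪ Pᶜ ∩ Sᶜ = Sᶜ := by
    ext; simp only [mem_union, mem_inter, mem_sdiff, mem_compl]; tauto
  have hP : P ∩ S ∪ P \ S = P := by ext; simp only [mem_union, mem_inter, mem_sdiff]; tauto
  have hPc : S \ P ∪ Pᶜ ∩ Sᶜ = Pᶜ := by
    ext; simp only [mem_union, mem_inter, mem_sdiff, mem_compl]; tauto
  rw [hS, hSc, hP, hPc] at hexch
  rw [cutCost_eq_card_interedges, cutCost_eq_card_interedges]
  omega

end Bisection

/-- Let `G` be a graph on `n` nodes (`n` even) with a planted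
bisection `(V₁, V₁ᶜ)` where `|V₁| = n/2`, and let `d_in` be the minimum degree of
`G[V₁] ∪ G[V₁ᶜ]` and `d_out` the maximum degree of the crossing graph `G₀`.
If `d_in - d_out > n/4 - 1`, then the planted bisection is the unique bisection of
minimum cost. -/
theorem minimum_bisection_recovery (n : ℕ) (hn : Even n) (G : SimpleGraph (Fin n))
    (V1 : Finset (Fin n)) (hV1 : V1.card = n / 2)
    (din dout : ℕ)
    (hdin : IsLeast (Set.range (sameDeg G V1)) din)
    (hdout : IsGreatest (Set.range (crossDeg G V1)) dout)
    (h : (din : ℝ) - (dout : ℝ) > (n : ℝ) / 4 - 1) :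
    ∀ S : Finset (Fin n), S.card = n / 2 → S ≠ V1 → S ≠ V1ᶜ →
      cutCost G V1 < cutCost G S := by
  intro S hS hSV1 hSV1c
  have hgap : ∀ m : ℕ, 4 * m ≤ n → dout + m ≤ din := by
    intro m hm
    have hm' : (4 * m : ℝ) ≤ n := by exact_mod_cast hm
    have : ((dout + m : ℕ) : ℝ) < ((din + 1 : ℕ) : ℝ) := by push_cast; linarith
    exact Nat.lt_succ_iff.mp (by exact_mod_cast this)
  have hin : ∀ v, din ≤ sameDeg G V1 v := fun v => hdin.2 ⟨v, rfl⟩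
  have hout : ∀ v, crossDeg G V1 v ≤ dout := fun v => hdout.2 ⟨v, rfl⟩
  have hsplit : #(V1 \ S) + #(V1 \ Sᶜ) = n / 2 := by
    rw [sdiff_compl, inf_eq_inter, card_sdiff_add_card_inter, hV1]
  obtain ⟨k, rfl⟩ := hn
  rcases le_total #(V1 \ S) #(V1 \ Sᶜ) with hle | hle
  · refine cutCost_lt_cutCost G hin hout (hS.trans hV1.symm) ?_ (hgap _ (by omega))
    exact sdiff_nonempty.2 fun hsub => hSV1 (eq_of_subset_of_card_le hsub (by omega)).symm
  · rw [← cutCost_compl G S]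
    have hSc : #Sᶜ = #V1 := by rw [card_compl, Fintype.card_fin, hS, hV1]; omega
    refine cutCost_lt_cutCost G hin hout hSc ?_ (hgap _ (by omega))
    refine sdiff_nonempty.2 fun hsub => hSV1c ?_
    rw [eq_compl_comm]
    exact eq_of_subset_of_card_le hsub hSc.le
end
end

section
/- Let n be a positive integer divisible by eight, and let d_in, d_out be nonnegative integers with d_in ≤ n/2 − 1 and d_out ≤ n/2. If d_in − d_out ≤ n/4 − 1, then there exists a graph G on n nodes together with a planted bisection V1, V2 whose connectivity parameters are exactly d_in and d_out, such that the planted bisection is NOT the unique minimum-cost bisection of G (the minimum bisection problem does not recover the planted bisection). -/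
/-!
Split the `n` nodes into four blocks `Q₀, Q₁, Q₂, Q₃` of size `q = n / 4`, each a copy of `ℤ/q`,
and plant `V₁ = Q₀ ∪ Q₁`. Translation-invariant adjacency lets one prescribe, for every pair of
blocks, how many neighbours each node of the first block has in the second: `s₁ = min d_in (q - 1)`
in its own block and `s₂ = d_in - s₁` in the other block of its side, `t₁ = min d_out q` and
`t₂ = d_out - t₁` in the two blocks of the opposite side, placed so that every node of
`S = Q₁ ∪ Q₂` has `s₂ + t₂` neighbours outside `S`, against `t₁ + t₂` for `V₁`. The hypothesis
`d_in - d_out ≤ n / 4 - 1` gives `s₂ ≤ t₁`, so `S` is a bisection no more expensive than the planted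
one. For odd `s₁`, the symmetric set of in-block differences uses an element of order two of the
even-order group `ℤ/q`.
-/

noncomputable section
open scoped Classical

open Finset
open scoped Pointwise

section NegClosed

variable {A : Type*} [AddGroup A] [Fintype A] [DecidableEq A]

lemma exists_negClosed_finset_card_of_succ {T : Finset A} {s : ℕ} (hA : Even (Fintype.card A))
    (h0 : 0 ∉ T) (hneg : ∀ x ∈ T, -x ∈ T) (hT : #T = s + 1) :
    ∃ T' : Finset A, 0 ∉ T' ∧ (∀ x ∈ T', -x ∈ T') ∧ #T' = s := by
  by_cases hfix : ∃ x ∈ T, -x = x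
  · obtain ⟨x, hx, hxx⟩ := hfix
    refine ⟨T.erase x, fun h => h0 (mem_of_mem_erase h), fun y hy => ?_, by simp [hx, hT]⟩
    refine mem_erase.2 ⟨fun h => (mem_erase.1 hy).1 ?_, hneg y (mem_of_mem_erase hy)⟩
    rw [← neg_neg y, h, hxx]
  · push Not at hfix
    obtain ⟨x, hx⟩ : T.Nonempty := card_pos.1 (by omega)
    -- an element of order two replaces the pair `{x, -x}`
    have : Fact (Nat.Prime 2) := ⟨Nat.prime_two⟩
    obtain ⟨z, hz⟩ := exists_prime_addOrderOf_dvd_card 2 (even_iff_two_dvd.1 hA)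
    have hz0 : z ≠ 0 := by rintro rfl; simp at hz
    have hzz : -z = z :=
      neg_eq_of_add_eq_zero_left (by rw [← two_nsmul, ← hz, addOrderOf_nsmul_eq_zero])
    have hzT : z ∉ T := fun h => hfix z h hzz
    have hnx : -x ∈ T.erase x := mem_erase.2 ⟨hfix x hx, hneg x hx⟩
    refine ⟨insert z ((T.erase x).erase (-x)), ?_, ?_, ?_⟩
    · simp only [mem_insert, mem_erase, not_or]
      exact ⟨hz0.symm, fun h => h0 h.2.2⟩
    · simp only [mem_insert, mem_erase]
      rintro y (rfl | ⟨hyx', hyx, hy⟩)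
      · exact Or.inl hzz
      · exact Or.inr ⟨neg_injective.ne hyx, fun h => hyx' (by rw [← h, neg_neg]), hneg y hy⟩
    · have hs : 0 < #(T.erase x) := card_pos.2 ⟨_, hnx⟩
      rw [card_erase_of_mem hx, hT] at hs
      rw [card_insert_of_notMem (fun h => hzT (mem_of_mem_erase (mem_of_mem_erase h))),
        card_erase_of_mem hnx, card_erase_of_mem hx, hT]
      omega

lemma exists_negClosed_finset_card (hA : Even (Fintype.card A)) {s : ℕ}
    (hs : s < Fintype.card A) : ∃ T : Finset A, 0 ∉ T ∧ (∀ x ∈ T, -x ∈ T) ∧ #T = s := by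
  have hle := Nat.le_sub_one_of_lt hs
  clear hs
  induction hle using Nat.decreasingInduction with
  | self => exact ⟨univ.erase 0, by simp, by simp, by simp⟩
  | of_succ k _ ih =>
    obtain ⟨T, h0, hneg, hT⟩ := ih
    exact exists_negClosed_finset_card_of_succ hA h0 hneg hT

end NegClosed

section BlockGraph

variable {ι A : Type*}

def blockCayleyGraph [AddGroup A] (T : ι → ι → Finset A)
    (hneg : ∀ c c', ∀ a ∈ T c c', -a ∈ T c' c) (h0 : ∀ c, 0 ∉ T c c) : SimpleGraph (ι × A) where
  Adj x y := y.2 - x.2 ∈ T x.1 y.1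
  symm := ⟨fun x y h => by simpa using hneg _ _ _ h⟩
  loopless := ⟨fun x h => h0 x.1 (by simpa using h)⟩

variable [Fintype ι] [Fintype A]

def SimpleGraph.HasBlockDegrees [DecidableEq ι] (H : SimpleGraph (ι × A)) (k : ι → ι → ℕ) :
    Prop :=
  ∀ x c, #{y | H.Adj x y ∧ y.1 = c} = k x.1 c

lemma blockCayleyGraph_hasBlockDegrees [AddGroup A] [DecidableEq ι] {T : ι → ι → Finset A}
    {hneg : ∀ c c', ∀ a ∈ T c c', -a ∈ T c' c} {h0 : ∀ c, 0 ∉ T c c} :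
    (blockCayleyGraph T hneg h0).HasBlockDegrees fun c c' => #(T c c') := by
  intro x c
  refine card_nbij' (fun y => y.2 - x.2) (fun a => (c, a + x.2)) ?_ ?_ ?_ ?_
  · intro y hy
    obtain ⟨-, hadj, rfl⟩ := mem_filter.1 hy
    exact hadj
  · intro a ha
    refine mem_filter.2 ⟨mem_univ _, ?_, rfl⟩
    show a + x.2 - x.2 ∈ T x.1 c
    simpa using ha
  · intro y hy
    obtain ⟨-, -, rfl⟩ := mem_filter.1 hy
    simp
  · intro a _
    simp

lemma exists_hasBlockDegrees [AddGroup A] [LinearOrder ι] [DecidableEq A]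
    (hA : Even (Fintype.card A)) (k : ι → ι → ℕ) (hk : ∀ c c', k c' c = k c c')
    (hdiag : ∀ c, k c c < Fintype.card A) (hoff : ∀ c c', k c c' ≤ Fintype.card A) :
    ∃ H : SimpleGraph (ι × A), H.HasBlockDegrees k := by
  choose D hD0 hDneg hDcard using fun c => exists_negClosed_finset_card hA (hdiag c)
  choose B _ hBcard using fun c c' => exists_subset_card_eq (s := (univ : Finset A)) (hoff c c')
  let T : ι → ι → Finset A := fun c c' =>
    if c < c' then B c c' else if c = c' then D c else -B c' c
  have hneg : ∀ c c', ∀ a ∈ T c c', -a ∈ T c' c := by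
    intro c c' a ha
    rcases lt_trichotomy c c' with h | rfl | h
    · simp_all [T, not_lt_of_gt h, h.ne']
    · simp_all [T]
    · simp_all [T, not_lt_of_gt h, h.ne']
  have h0 : ∀ c, 0 ∉ T c c := by simpa [T] using hD0
  refine ⟨blockCayleyGraph T hneg h0, fun x c => ?_⟩
  rw [blockCayleyGraph_hasBlockDegrees x c]
  rcases lt_trichotomy x.1 c with h | h | h
  · simp [T, h, hBcard]
  · simp [T, h, hDcard]
  · simp [T, not_lt_of_gt h, h.ne', hBcard, hk]

lemma SimpleGraph.HasBlockDegrees.card_adj_fst_mem [DecidableEq ι] {H : SimpleGraph (ι × A)}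
    {k : ι → ι → ℕ} (hH : H.HasBlockDegrees k) (x : ι × A) (C : Finset ι) :
    #{y | H.Adj x y ∧ y.1 ∈ C} = ∑ c ∈ C, k x.1 c := by
  rw [card_eq_sum_card_fiberwise (f := Prod.fst) (t := C) (fun y hy => (mem_filter.1 hy).2.2)]
  refine sum_congr rfl fun c hc => ?_
  rw [← hH, filter_filter]
  congr 1
  refine filter_congr fun y _ => ?_
  constructor
  · rintro ⟨⟨h, -⟩, rfl⟩; exact ⟨h, rfl⟩
  · rintro ⟨h, rfl⟩; exact ⟨⟨h, hc⟩, rfl⟩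

end BlockGraph

lemma cutCost_eq_sum_crossDeg {n : ℕ} (G : SimpleGraph (Fin n)) (S : Finset (Fin n)) :
    cutCost G S = ∑ u ∈ S, crossDeg G S u := by
  unfold cutCost
  rw [card_eq_sum_card_fiberwise (f := Prod.fst) (t := S) (fun p hp => (mem_filter.1 hp).2.2.1)]
  refine sum_congr rfl fun u hu => ?_
  refine card_nbij' Prod.snd (fun w => (u, w)) ?_ ?_ ?_ ?_
  · intro p hp
    obtain ⟨hmem, rfl⟩ := mem_filter.1 hp
    obtain ⟨-, hadj, -, hp2⟩ := mem_filter.1 hmem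
    exact mem_filter.2 ⟨mem_univ _, hadj, by simp [hp2, hu]⟩
  · intro w hw
    obtain ⟨-, hadj, hw⟩ := mem_filter.1 hw
    exact mem_filter.2 ⟨mem_filter.2 ⟨mem_univ _, hadj, hu, by simp_all⟩, rfl⟩
  · intro p hp
    obtain ⟨-, rfl⟩ := mem_filter.1 hp
    rfl
  · intro w _
    rfl

section BlockBisection

variable {n : ℕ} {ι A : Type*} [DecidableEq ι] [Fintype A]

def blockUnion (e : Fin n ≃ ι × A) (C : Finset ι) : Finset (Fin n) := {v | (e v).1 ∈ C}

lemma card_blockUnion (e : Fin n ≃ ι × A) (C : Finset ι) :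
    #(blockUnion e C) = #C * Fintype.card A := by
  rw [← card_univ, ← card_product]
  exact card_equiv e (by simp [blockUnion])

variable [Fintype ι] {H : SimpleGraph (ι × A)} {k : ι → ι → ℕ}

lemma card_comap_adj_fst_mem (hH : H.HasBlockDegrees k) (e : Fin n ≃ ι × A) (v : Fin n)
    (C : Finset ι) :
    #{w | (H.comap e).Adj v w ∧ (e w).1 ∈ C} = ∑ c ∈ C, k (e v).1 c := by
  rw [← hH.card_adj_fst_mem]
  exact card_equiv e (by simp)

lemma sameDeg_comap_blockUnion (hH : H.HasBlockDegrees k) (e : Fin n ≃ ι × A) (C : Finset ι)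
    (v : Fin n) :
    sameDeg (H.comap e) (blockUnion e C) v = ∑ c with (c ∈ C ↔ (e v).1 ∈ C), k (e v).1 c := by
  rw [← card_comap_adj_fst_mem hH]
  unfold sameDeg
  congr 1
  ext w
  simp [blockUnion]

lemma crossDeg_comap_blockUnion (hH : H.HasBlockDegrees k) (e : Fin n ≃ ι × A) (C : Finset ι)
    (v : Fin n) :
    crossDeg (H.comap e) (blockUnion e C) v = ∑ c with ¬(c ∈ C ↔ (e v).1 ∈ C), k (e v).1 c := by
  rw [← card_comap_adj_fst_mem hH]
  unfold crossDeg
  congr 1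
  ext w
  simp [blockUnion]

end BlockBisection

def fourBlockDegree (s₁ s₂ t₁ t₂ : ℕ) : Fin 4 → Fin 4 → ℕ :=
  ![![s₁, s₂, t₂, t₁], ![s₂, s₁, t₁, t₂], ![t₂, t₁, s₁, s₂], ![t₁, t₂, s₂, s₁]]

lemma exists_fourBlock_graph {n q : ℕ} (hn : n = 4 * q) (hq : Even q) (hq0 : 0 < q)
    {s₁ s₂ t₁ t₂ : ℕ} (hs₁ : s₁ < q) (hs₂ : s₂ ≤ q) (ht₁ : t₁ ≤ q) (ht₂ : t₂ ≤ q) :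
    ∃ (G : SimpleGraph (Fin n)) (V₁ S : Finset (Fin n)),
      #V₁ = 2 * q ∧ #S = 2 * q ∧ S ≠ V₁ ∧ S ≠ V₁ᶜ ∧
      (∀ v, sameDeg G V₁ v = s₁ + s₂) ∧ (∀ v, crossDeg G V₁ v = t₁ + t₂) ∧
      ∀ v ∈ S, crossDeg G S v = s₂ + t₂ := by
  have : NeZero q := ⟨hq0.ne'⟩
  set k := fourBlockDegree s₁ s₂ t₁ t₂
  obtain ⟨H, hH⟩ := exists_hasBlockDegrees (A := ZMod q) (by simpa using hq) k
    (by intro c c'; fin_cases c <;> fin_cases c' <;> rfl)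
    (by intro c; fin_cases c <;> simpa [k, fourBlockDegree])
    (by intro c c'; fin_cases c <;> fin_cases c' <;> simp [k, fourBlockDegree] <;> omega)
  let e : Fin n ≃ Fin 4 × ZMod q := Fintype.equivOfCardEq (by simp [hn])
  have hmem (c : Fin 4) (C : Finset (Fin 4)) : e.symm (c, 0) ∈ blockUnion e C ↔ c ∈ C := by
    simp [blockUnion]
  refine ⟨H.comap e, blockUnion e {0, 1}, blockUnion e {1, 2}, ?_, ?_, ?_, ?_, ?_, ?_, ?_⟩
  · simp [card_blockUnion]
  · simp [card_blockUnion]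
  · intro h
    have := (hmem 2 {1, 2}).2 (by decide)
    rw [h, hmem] at this
    exact absurd this (by decide)
  · intro h
    have := (hmem 1 {1, 2}).2 (by decide)
    rw [h, mem_compl, hmem] at this
    exact this (by decide)
  · intro v
    rw [sameDeg_comap_blockUnion hH]
    generalize (e v).1 = c
    fin_cases c <;> simp [k, fourBlockDegree, sum_filter, Fin.sum_univ_four, add_comm]
  · intro v
    rw [crossDeg_comap_blockUnion hH]
    generalize (e v).1 = c
    fin_cases c <;> simp [k, fourBlockDegree, sum_filter, Fin.sum_univ_four, add_comm]
  · intro v hv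
    rw [crossDeg_comap_blockUnion hH]
    simp only [blockUnion, mem_filter, mem_univ, true_and] at hv
    revert hv
    generalize (e v).1 = c
    fin_cases c <;> simp [k, fourBlockDegree, sum_filter, Fin.sum_univ_four, add_comm]

/-- Let `n` be divisible by 8 and let `d_in ≤ n/2 - 1`,
`d_out ≤ n/2` be nonnegative integers with `d_in - d_out ≤ n/4 - 1`. Then there is
a graph `G` on `n` nodes together with a planted bisection with connectivity
parameters exactly `d_in` and `d_out` for which the planted bisection is not the
unique minimum-cost bisection. -/
theorem minimum_bisection_nonrecovery (n : ℕ) (h8 : 8 ∣ n)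
    (din dout : ℕ) (hdin : din ≤ n / 2 - 1) (hdout : dout ≤ n / 2)
    (h : (din : ℝ) - (dout : ℝ) ≤ (n : ℝ) / 4 - 1) :
    ∃ (G : SimpleGraph (Fin n)) (V1 : Finset (Fin n)),
      V1.card = n / 2 ∧
      IsLeast (Set.range (sameDeg G V1)) din ∧
      IsGreatest (Set.range (crossDeg G V1)) dout ∧
      ∃ S : Finset (Fin n), S.card = n / 2 ∧ S ≠ V1 ∧ S ≠ V1ᶜ ∧
        cutCost G S ≤ cutCost G V1 := by
  obtain ⟨t, rfl⟩ := h8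
  have hgap : din + 1 ≤ dout + 2 * t := by
    have : (din : ℝ) + 1 ≤ dout + 2 * t := by push_cast at h; linarith
    exact_mod_cast this
  have : Nonempty (Fin (8 * t)) := ⟨⟨0, by omega⟩⟩
  obtain ⟨G, V1, S, hV1, hS, hSV1, hSV1c, hsame, hcross, hcrossS⟩ :=
    exists_fourBlock_graph (n := 8 * t) (q := 2 * t) (by ring) (even_two_mul t) (by omega)
      (s₁ := min din (2 * t - 1)) (s₂ := din - min din (2 * t - 1))
      (t₁ := min dout (2 * t)) (t₂ := dout - min dout (2 * t))
      (by omega) (by omega) (by omega) (by omega)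
  refine ⟨G, V1, by omega, ?_, ?_, S, by omega, hSV1, hSV1c, ?_⟩
  · rw [show sameDeg G V1 = fun _ => din from funext fun v => by rw [hsame]; omega,
      Set.range_const]
    exact isLeast_singleton
  · rw [show crossDeg G V1 = fun _ => dout from funext fun v => by rw [hcross]; omega,
      Set.range_const]
    exact isGreatest_singleton
  · rw [cutCost_eq_sum_crossDeg, cutCost_eq_sum_crossDeg, sum_congr rfl hcrossS,
      sum_congr rfl fun v _ => hcross v, sum_const, sum_const, hS, hV1]
    exact Nat.mul_le_mul_left _ (by omega)
end
end

section
/- Let G be a graph on n ≥ 4 nodes (n even) with planted bisection V1, V2. Suppose the induced subgraphs G1 = G[V1] and G2 = G[V2] are both d_in-regular for some d_in ∈ {1,…,n/2 − 1}, and the bipartite graph G0 of edges crossing the bisection is d_out-regular for some d_out ∈ {0,…,n/2}. If d_in − d_out ≥ n/4 − 1, then the cut vector x̄ of the planted bisection is an optimal solution of the metric LP relaxation (LP-P); that is, its objective value |E0| equals the minimum of (LP-P). -/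
/-!
Let `x` be feasible, `m = n / 2`, and sum `x` over ordered pairs: `ew` over edges inside the
sides, `nw` over non-adjacent pairs inside the sides, `eo` over crossing edges and `c` over all
crossing pairs. Averaging triangle inequalities gives two bounds.

* Routing each crossing pair `(i, k)` through the `d_out` crossing neighbours `j` of `i`
  (`x i k ≤ x i j + x j k`, and `j, k` lie on the same side) gives
  `d_out * c ≤ m * eo + d_out * (ew + nw)`.
* Two non-adjacent vertices on the same side have at least `2 d_in + 2 - m` common neighbours,
  since their neighbourhoods lie among the `m - 2` other vertices of that side; routing through
  them gives `(2 d_in + 2 - m) * nw ≤ 2 (m - 1 - d_in) * ew`.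

The equipartition constraint says `ew + nw + c = 2 m²`, and with `d_in - d_out ≥ m / 2 - 1`
the two bounds combine to `ew + eo ≥ 2 m d_out`, i.e. the objective at `x` is at least
`m d_out = |E₀|`, the objective at the cut vector.
-/

noncomputable section
open scoped Classical

/-- `i` and `j` lie on the same side of the planted bisection
`V₁ = {0, …, n/2 - 1}`, `V₂ = {n/2, …, n-1}`. -/
def sameSide (n : ℕ) (i j : Fin n) : Prop :=
  ((i : ℕ) < n / 2 ↔ (j : ℕ) < n / 2)

/-- The sum of `f i j` over all unordered pairs `{i, j}` with `i < j`. -/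
def pairSum (n : ℕ) (f : Fin n → Fin n → ℝ) : ℝ :=
  ∑ i : Fin n, ∑ j : Fin n, if i < j then f i j else 0

/-- Feasibility for the metric LP relaxation (LP-P): symmetry of the indexing by
unordered pairs, the triangle inequalities, the perimeter inequalities, and the
equipartition equality constraint. -/
def LPfeasible (n : ℕ) (x : Fin n → Fin n → ℝ) : Prop :=
  (∀ i j, x i j = x j i) ∧
  (∀ i j k : Fin n, i ≠ j → i ≠ k → j ≠ k → x i j ≤ x i k + x j k) ∧
  (∀ i j k : Fin n, i < j → j < k → x i j + x i k + x j k ≤ 2) ∧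
  pairSum n x = (n : ℝ) ^ 2 / 4

/-- The objective function of (LP-P): `∑_{(i,j) ∈ E} x_{ij}`, each edge counted once. -/
def LPobj (n : ℕ) (G : SimpleGraph (Fin n)) (x : Fin n → Fin n → ℝ) : ℝ :=
  ∑ i : Fin n, ∑ j : Fin n, if i < j ∧ G.Adj i j then x i j else 0

/-- The cut vector of the bisection `(S, Sᶜ)`. -/
def cutVecOf {n : ℕ} (S : Finset (Fin n)) : Fin n → Fin n → ℝ :=
  fun i j => if (i ∈ S ↔ j ∈ S) then 0 else 1

/-- The cut vector of the planted bisection `V₁ = {0, …, n/2 - 1}`, `V₂ = {n/2, …, n-1}`. -/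
def cutVec (n : ℕ) : Fin n → Fin n → ℝ :=
  fun i j => if sameSide n i j then 0 else 1

/-- The LP relaxation (LP-P) for the graph `G` recovers the bisection with cut vector
`xb`: `xb` is feasible, and it is the unique optimal solution (any feasible point
with the same objective value agrees with `xb` on all off-diagonal entries). -/
def LPrecoversOf (n : ℕ) (G : SimpleGraph (Fin n)) (xb : Fin n → Fin n → ℝ) : Prop :=
  LPfeasible n xb ∧
  ∀ x : Fin n → Fin n → ℝ, LPfeasible n x →
    LPobj n G xb ≤ LPobj n G x ∧
    (LPobj n G x = LPobj n G xb → ∀ i j : Fin n, i ≠ j → x i j = xb i j)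

/-- The LP relaxation (LP-P) for `G` recovers the planted bisection
`V₁ = {0, …, n/2 - 1}`, `V₂ = {n/2, …, n-1}`. -/
def LPrecovers (n : ℕ) (G : SimpleGraph (Fin n)) : Prop :=
  LPrecoversOf n G (cutVec n)

/-- The degree of `v` in the graph `G₁ ∪ G₂` of within-part edges of `G`
(with respect to the planted bisection into the first and second half). -/
def inDeg (n : ℕ) (G : SimpleGraph (Fin n)) (v : Fin n) : ℕ :=
  {w : Fin n | G.Adj v w ∧ sameSide n v w}.ncard

/-- The degree of `v` in the crossing bipartite graph `G₀` of `G`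
(with respect to the planted bisection into the first and second half). -/
def outDeg (n : ℕ) (G : SimpleGraph (Fin n)) (v : Fin n) : ℕ :=
  {w : Fin n | G.Adj v w ∧ ¬ sameSide n v w}.ncard


open Finset SimpleGraph

variable {V : Type*}

/-- The LP has one variable per unordered pair, so only the symmetric off-diagonal part of
`x : V → V → ℝ` carries meaning; the diagonal `x i i` is junk. -/
structure IsOffDiagMetric (x : V → V → ℝ) : Prop where
  symm : ∀ i j, x i j = x j i
  triangle : ∀ i j k, i ≠ j → i ≠ k → j ≠ k → x i j ≤ x i k + x j k

section Bisection

variable {s : V → Prop}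

/-- For the planted side `s`: `G ⊓ sideGraph s` is `G₁ ∪ G₂`, `G \ sideGraph s` is `G₀`. -/
def sideGraph (s : V → Prop) : SimpleGraph V where
  Adj i j := i ≠ j ∧ (s i ↔ s j)
  symm := ⟨fun _ _ h => ⟨h.1.symm, h.2.symm⟩⟩
  loopless := ⟨fun _ h => h.1 rfl⟩

@[simp]
theorem sideGraph_adj {i j : V} : (sideGraph s).Adj i j ↔ i ≠ j ∧ (s i ↔ s j) := Iff.rfl

@[simp]
theorem compl_sideGraph_adj {i j : V} : (sideGraph s)ᶜ.Adj i j ↔ ¬(s i ↔ s j) := by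
  rw [compl_adj, sideGraph_adj]
  exact ⟨fun h h' => h.2 ⟨h.1, h'⟩,
    fun h => ⟨by rintro rfl; exact h Iff.rfl, fun h' => h h'.2⟩⟩

def cutVector (s : V → Prop) (i j : V) : ℝ :=
  if (s i ↔ s j) then 0 else 1

theorem isOffDiagMetric_cutVector : IsOffDiagMetric (cutVector s) where
  symm i j := by simp only [cutVector, Iff.comm]
  triangle i j k _ _ _ := by
    unfold cutVector
    by_cases s i <;> by_cases s j <;> by_cases s k <;> simp_all

theorem cutVector_add_add_le_two (i j k : V) :
    cutVector s i j + cutVector s i k + cutVector s j k ≤ 2 := by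
  unfold cutVector
  by_cases s i <;> by_cases s j <;> by_cases s k <;> simp_all <;> norm_num

end Bisection

variable [Fintype V]

theorem IsOffDiagMetric.nonneg {x : V → V → ℝ} (hx : IsOffDiagMetric x)
    (hV : 3 ≤ Fintype.card V) {i j : V} (hij : i ≠ j) : 0 ≤ x i j := by
  obtain ⟨k, -, hk⟩ := exists_mem_notMem_of_card_lt_card (s := {i, j}) (t := univ)
    (by rw [card_univ]; exact card_le_two.trans_lt (by omega))
  simp only [mem_insert, mem_singleton, not_or] at hk
  have hik := hx.triangle i k j (Ne.symm hk.1) hij hk.2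
  have hjk := hx.triangle j k i (Ne.symm hk.2) hij.symm hk.1
  linarith [hx.symm k j, hx.symm j i, hx.symm k i]

/-- The sum of `x i j` over ordered pairs of adjacent vertices: each edge is counted twice. -/
def edgeSum (H : SimpleGraph V) [DecidableRel H.Adj] (x : V → V → ℝ) : ℝ :=
  ∑ i, ∑ j ∈ H.neighborFinset i, x i j

theorem edgeSum_nonneg {H : SimpleGraph V} [DecidableRel H.Adj] {x : V → V → ℝ}
    (hx : ∀ i j, i ≠ j → 0 ≤ x i j) : 0 ≤ edgeSum H x :=
  sum_nonneg fun i _ => sum_nonneg fun j hj => hx i j (H.ne_of_adj ((mem_neighborFinset ..).1 hj))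

theorem edgeSum_inf_add_edgeSum_sdiff (H F : SimpleGraph V) [DecidableRel H.Adj]
    [DecidableRel F.Adj] (x : V → V → ℝ) :
    edgeSum (H ⊓ F) x + edgeSum (H \ F) x = edgeSum H x := by
  simp only [edgeSum, ← sum_add_distrib, neighborFinset_inf, neighborFinset_sdiff,
    sum_inter_add_sum_sdiff]

theorem edgeSum_add_edgeSum_sdiff_of_le {H F : SimpleGraph V} [DecidableRel H.Adj]
    [DecidableRel F.Adj] (h : H ≤ F) (x : V → V → ℝ) :
    edgeSum H x + edgeSum (F \ H) x = edgeSum F x := by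
  simpa only [inf_eq_right.2 h] using edgeSum_inf_add_edgeSum_sdiff F H x

theorem edgeSum_add_edgeSum_compl [DecidableEq V] (H : SimpleGraph V) [DecidableRel H.Adj]
    (x : V → V → ℝ) : edgeSum H x + edgeSum Hᶜ x = edgeSum ⊤ x :=
  edgeSum_add_edgeSum_sdiff_of_le le_top x

theorem degree_sdiff_add_degree_of_le {H F : SimpleGraph V} [DecidableRel H.Adj]
    [DecidableRel F.Adj] (h : H ≤ F) (v : V) : (F \ H).degree v + H.degree v = F.degree v := by
  simp only [← card_neighborFinset_eq_degree, neighborFinset_sdiff]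
  exact card_sdiff_add_card_eq_card fun w hw => by simpa using h ((mem_neighborFinset ..).1 hw)

theorem sum_sum_neighborFinset_comm (H : SimpleGraph V) [DecidableRel H.Adj] (f : V → V → ℝ) :
    ∑ i, ∑ j ∈ H.neighborFinset i, f i j = ∑ j, ∑ i ∈ H.neighborFinset j, f i j :=
  sum_comm' fun i j => by simp [H.adj_comm]

theorem sum_sum_neighborFinset_eq_sum_degree_mul (H : SimpleGraph V) [DecidableRel H.Adj]
    (g : V → ℝ) : ∑ i, ∑ _j ∈ H.neighborFinset i, g i = ∑ i, H.degree i * g i := by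
  simp [sum_const]

theorem SimpleGraph.IsRegularOfDegree.sum_sum_neighborFinset {H : SimpleGraph V}
    [DecidableRel H.Adj] {d : ℕ} (hH : H.IsRegularOfDegree d) (g : V → ℝ) :
    ∑ i, ∑ _j ∈ H.neighborFinset i, g i = d * ∑ i, g i := by
  simp [hH.degree_eq, mul_sum]

theorem two_mul_sum_lt_adj [LinearOrder V] (H : SimpleGraph V) [DecidableRel H.Adj]
    {x : V → V → ℝ} (hx : ∀ i j, x i j = x j i) :
    2 * ∑ i, ∑ j, (if i < j ∧ H.Adj i j then x i j else 0) = edgeSum H x := by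
  have hsplit : ∀ i j, (if H.Adj i j then x i j else 0) =
      (if i < j ∧ H.Adj i j then x i j else 0) + (if j < i ∧ H.Adj j i then x j i else 0) := by
    intro i j
    rcases lt_trichotomy i j with h | rfl | h
    · simp [h, h.not_gt]
    · simp
    · simp [h, h.not_gt, H.adj_comm, hx i j]
  simp only [edgeSum, neighborFinset_eq_filter, sum_filter, hsplit, sum_add_distrib]
  rw [sum_comm (f := fun i j => if j < i ∧ H.Adj j i then x j i else 0), two_mul]

theorem edgeSum_cutVector {s : V → Prop} (H : SimpleGraph V) [DecidableRel H.Adj] :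
    edgeSum H (cutVector s) = ∑ v, ((H \ sideGraph s).degree v : ℝ) := by
  rw [← edgeSum_inf_add_edgeSum_sdiff H (sideGraph s)]
  have hin : edgeSum (H ⊓ sideGraph s) (cutVector s) = 0 :=
    sum_eq_zero fun i _ => sum_eq_zero fun j hj => by simp_all [cutVector]
  have hout : edgeSum (H \ sideGraph s) (cutVector s) = ∑ v, ((H \ sideGraph s).degree v : ℝ) :=
    sum_congr rfl fun i _ => by
      rw [sum_congr rfl (g := fun _ => (1 : ℝ)), sum_const, nsmul_one,
        card_neighborFinset_eq_degree]
      intro j hj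
      simp_all [cutVector, H.ne_of_adj]
  rw [hin, hout, zero_add]

section Crossing

variable {s : V → Prop} {x : V → V → ℝ} {H : SimpleGraph V} [DecidableRel H.Adj] {d : ℕ}

theorem erase_neighborFinset_compl_sideGraph [DecidableEq V] {i j : V}
    (hij : (sideGraph s)ᶜ.Adj i j) :
    ((sideGraph s)ᶜ.neighborFinset i).erase j = (sideGraph s).neighborFinset j := by
  rw [compl_sideGraph_adj] at hij
  ext k
  simp only [mem_erase, mem_neighborFinset, compl_sideGraph_adj, sideGraph_adj]
  grind

/-- The inequalities `x i k ≤ x i j + x k j` summed over the neighbours `j` of `i`; the term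
`j = k` holds trivially, which keeps the junk diagonal `x k k` out. -/
theorem mul_le_add_sum_erase [DecidableEq V] (hx : IsOffDiagMetric x)
    (hH : H.IsRegularOfDegree d) {i k : V} (hik : i ≠ k) :
    d * x i k ≤
      ∑ j ∈ H.neighborFinset i, x i j + ∑ j ∈ (H.neighborFinset i).erase k, x k j := by
  have hsub : ∑ j ∈ H.neighborFinset i, (x i k - x i j) ≤
      ∑ j ∈ (H.neighborFinset i).erase k, x k j := by
    rw [← sum_erase _ (f := fun j => x i k - x i j) (sub_self (x i k))]
    refine sum_le_sum fun j hj => ?_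
    have hj' := mem_neighborFinset H i j |>.1 (mem_of_mem_erase hj)
    linarith [hx.triangle i k j hik (H.ne_of_adj hj') (ne_of_mem_erase hj).symm]
  rw [sum_sub_distrib, sum_const, card_neighborFinset_eq_degree, hH.degree_eq, nsmul_eq_mul]
    at hsub
  linarith

theorem mul_edgeSum_compl_sideGraph_le [DecidableEq V] (hx : IsOffDiagMetric x)
    (hHK : H ≤ (sideGraph s)ᶜ) (hH : H.IsRegularOfDegree d) {m : ℕ}
    (hK : (sideGraph s)ᶜ.IsRegularOfDegree m) :
    d * edgeSum (sideGraph s)ᶜ x ≤ m * edgeSum H x + d * edgeSum (sideGraph s) x := by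
  calc d * edgeSum (sideGraph s)ᶜ x
      = ∑ i, ∑ k ∈ (sideGraph s)ᶜ.neighborFinset i, d * x i k := by
        simp only [edgeSum, mul_sum]
    _ ≤ ∑ i, ∑ k ∈ (sideGraph s)ᶜ.neighborFinset i, (∑ j ∈ H.neighborFinset i, x i j
          + ∑ j ∈ (H.neighborFinset i).erase k, x k j) := by
        gcongr with i _ k hk
        exact mul_le_add_sum_erase hx hH ((sideGraph s)ᶜ.ne_of_adj ((mem_neighborFinset ..).1 hk))
    _ = m * edgeSum H x +
          ∑ i, ∑ j ∈ H.neighborFinset i, ∑ k ∈ (sideGraph s).neighborFinset j, x j k := by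
        simp only [sum_add_distrib, hK.sum_sum_neighborFinset, edgeSum]
        congr 1
        refine sum_congr rfl fun i _ => ?_
        rw [sum_comm' (t' := H.neighborFinset i)
          (s' := fun j => ((sideGraph s)ᶜ.neighborFinset i).erase j)]
        · refine sum_congr rfl fun j hj => ?_
          rw [erase_neighborFinset_compl_sideGraph (hHK ((mem_neighborFinset ..).1 hj))]
          simp only [hx.symm]
        · intro k j
          simp only [mem_erase]
          tauto
    _ = m * edgeSum H x + d * edgeSum (sideGraph s) x := by
        rw [sum_sum_neighborFinset_comm, hH.sum_sum_neighborFinset]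
        rfl

end Crossing

section Within

variable {s : V → Prop} {x : V → V → ℝ} {H : SimpleGraph V} [DecidableRel H.Adj] {d k : ℕ}

theorem le_card_inter_neighborFinset (hHS : H ≤ sideGraph s) (hH : H.IsRegularOfDegree d)
    (hS : (sideGraph s).IsRegularOfDegree k) {a b : V} (hab : (sideGraph s).Adj a b)
    (hnab : ¬H.Adj a b) :
    (2 * d + 1 - k : ℝ) ≤ #(H.neighborFinset a ∩ H.neighborFinset b) := by
  have hunion : H.neighborFinset a ∪ H.neighborFinset b ⊆
      ((sideGraph s).neighborFinset a).erase b := by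
    intro c hc
    simp only [mem_union, mem_neighborFinset, mem_erase] at hc ⊢
    rcases hc with hac | hbc
    · exact ⟨by rintro rfl; exact hnab hac, hHS hac⟩
    · exact ⟨(H.ne_of_adj hbc).symm, fun hac => hnab (hac ▸ hbc.symm),
        hab.2.trans (hHS hbc).2⟩
  have hunion_card := card_le_card hunion
  rw [card_erase_of_mem ((mem_neighborFinset ..).2 hab), card_neighborFinset_eq_degree,
    hS.degree_eq] at hunion_card
  have hk : 0 < k := hS.degree_eq a ▸ hab.degree_pos_left
  have hsum := card_inter_add_card_union (H.neighborFinset a) (H.neighborFinset b)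
  simp only [card_neighborFinset_eq_degree, hH.degree_eq] at hsum
  rw [sub_le_iff_le_add]
  exact_mod_cast (by omega : 2 * d + 1 ≤ #(H.neighborFinset a ∩ H.neighborFinset b) + k)

theorem mul_le_sum_add_sum_of_not_adj (hx : IsOffDiagMetric x)
    (hnn : ∀ i j, i ≠ j → 0 ≤ x i j)
    (hHS : H ≤ sideGraph s) (hH : H.IsRegularOfDegree d) (hS : (sideGraph s).IsRegularOfDegree k)
    {a b : V} (hab : (sideGraph s).Adj a b) (hnab : ¬H.Adj a b) :
    (2 * d + 1 - k : ℝ) * x a b ≤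
      ∑ c ∈ H.neighborFinset a, x a c + ∑ c ∈ H.neighborFinset b, x b c := by
  have hnn' : ∀ v, ∀ c ∈ H.neighborFinset v, 0 ≤ x v c :=
    fun v c hc => hnn v c (H.ne_of_adj ((mem_neighborFinset ..).1 hc))
  calc (2 * d + 1 - k : ℝ) * x a b
      ≤ #(H.neighborFinset a ∩ H.neighborFinset b) * x a b :=
        mul_le_mul_of_nonneg_right (le_card_inter_neighborFinset hHS hH hS hab hnab)
          (hnn a b hab.1)
    _ = ∑ c ∈ H.neighborFinset a ∩ H.neighborFinset b, x a b := by
        rw [sum_const, nsmul_eq_mul]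
    _ ≤ ∑ c ∈ H.neighborFinset a ∩ H.neighborFinset b, (x a c + x b c) := by
        refine sum_le_sum fun c hc => ?_
        simp only [mem_inter, mem_neighborFinset] at hc
        exact hx.triangle a b c hab.1 (H.ne_of_adj hc.1) (H.ne_of_adj hc.2)
    _ ≤ ∑ c ∈ H.neighborFinset a, x a c + ∑ c ∈ H.neighborFinset b, x b c := by
        rw [sum_add_distrib]
        exact add_le_add
          (sum_le_sum_of_subset_of_nonneg inter_subset_left fun c hc _ => hnn' a c hc)
          (sum_le_sum_of_subset_of_nonneg inter_subset_right fun c hc _ => hnn' b c hc)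

theorem mul_edgeSum_sideGraph_sdiff_le (hx : IsOffDiagMetric x)
    (hnn : ∀ i j, i ≠ j → 0 ≤ x i j) (hHS : H ≤ sideGraph s) (hH : H.IsRegularOfDegree d)
    (hS : (sideGraph s).IsRegularOfDegree k) :
    (2 * d + 1 - k : ℝ) * edgeSum (sideGraph s \ H) x ≤ 2 * (k - d) * edgeSum H x := by
  have hdeg : ∀ v, ((sideGraph s \ H).degree v : ℝ) = k - d := by
    intro v
    have h := degree_sdiff_add_degree_of_le hHS v
    rw [hH.degree_eq, hS.degree_eq] at h
    rw [← h]
    push_cast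
    ring
  calc (2 * d + 1 - k : ℝ) * edgeSum (sideGraph s \ H) x
      = ∑ a, ∑ b ∈ (sideGraph s \ H).neighborFinset a, (2 * d + 1 - k : ℝ) * x a b := by
        simp only [edgeSum, mul_sum]
    _ ≤ ∑ a, ∑ b ∈ (sideGraph s \ H).neighborFinset a,
          (∑ c ∈ H.neighborFinset a, x a c + ∑ c ∈ H.neighborFinset b, x b c) := by
        gcongr with a _ b hb
        rw [mem_neighborFinset, sdiff_adj] at hb
        exact mul_le_sum_add_sum_of_not_adj hx hnn hHS hH hS hb.1 hb.2
    _ = 2 * (k - d) * edgeSum H x := by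
        simp only [sum_add_distrib]
        rw [sum_sum_neighborFinset_comm (sideGraph s \ H)
          (fun _ b => ∑ c ∈ H.neighborFinset b, x b c)]
        simp only [sum_sum_neighborFinset_eq_sum_degree_mul, hdeg, ← mul_sum, edgeSum]
        ring

end Within

section Balanced

variable {s : V → Prop} {m : ℕ}

theorem sideGraph_isRegularOfDegree (hs : #{v | s v} = m) (hs' : #{v | ¬s v} = m) :
    (sideGraph s).IsRegularOfDegree (m - 1) := by
  intro v
  have hnbr : (sideGraph s).neighborFinset v = ({w | s w ↔ s v} : Finset V).erase v := by
    ext w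
    simp [ne_comm, iff_comm]
  rw [← card_neighborFinset_eq_degree, hnbr, card_erase_of_mem (by simp)]
  by_cases hv : s v <;> simp [hv, hs, hs']

theorem compl_sideGraph_isRegularOfDegree [DecidableEq V] (hs : #{v | s v} = m)
    (hs' : #{v | ¬s v} = m) : (sideGraph s)ᶜ.IsRegularOfDegree m := by
  have hcard : Fintype.card V = m + m := by
    rw [← card_univ, ← card_filter_add_card_filter_not s, hs, hs']
  have h := (sideGraph_isRegularOfDegree hs hs').compl
  rwa [hcard, show m + m - 1 - (m - 1) = m by omega] at h

end Balanced

/-- The gap condition makes `2 * dIn + 2 - m ≥ 2 * dOut`, so that `hwithin` controls `nw` by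
`ew` well enough to absorb the `nw` term of `hcross`. -/
theorem two_mul_mul_le_of_crossing_of_within {m dIn dOut ew eo nw c : ℝ} (hm : 0 < m)
    (hdOut : 0 ≤ dOut) (hew : 0 ≤ ew) (hgap : m / 2 - 1 ≤ dIn - dOut)
    (htotal : ew + nw + c = 2 * m ^ 2) (hcross : dOut * c ≤ m * eo + dOut * (ew + nw))
    (hwithin : (2 * dIn + 1 - (m - 1)) * nw ≤ 2 * (m - 1 - dIn) * ew) :
    2 * m * dOut ≤ ew + eo := by
  have hkey : 0 ≤ (m - 2 * dOut) * ew - 2 * dOut * nw := by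
    rcases hdOut.eq_or_lt with rfl | hpos
    · nlinarith
    · have hK : 0 < 2 * dIn + 2 - m := by linarith
      refine nonneg_of_mul_nonneg_right ?_ hK
      nlinarith [mul_le_mul_of_nonneg_left hwithin (by linarith : 0 ≤ 2 * dOut),
        mul_nonneg (mul_nonneg hm.le (by linarith : 0 ≤ dIn - dOut + 1 - m / 2)) hew]
  have : m * (2 * m * dOut) ≤ m * (ew + eo) := by nlinarith
  exact le_of_mul_le_mul_left this hm

section PlantedBisection

variable {n : ℕ}

def firstHalf (n : ℕ) (i : Fin n) : Prop :=
  (i : ℕ) < n / 2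

theorem card_firstHalf : #{i | firstHalf n i} = n / 2 := by
  convert Fin.card_filter_val_lt.trans (min_eq_right (Nat.div_le_self n 2)) using 3
  rfl

theorem card_not_firstHalf (hn : Even n) : #{i | ¬firstHalf n i} = n / 2 := by
  have h := card_filter_add_card_filter_not (s := univ) (firstHalf n)
  rw [card_firstHalf, card_univ, Fintype.card_fin] at h
  obtain ⟨m, rfl⟩ := hn
  omega

theorem inDeg_eq_degree (G : SimpleGraph (Fin n)) (v : Fin n) :
    inDeg n G v = (G ⊓ sideGraph (firstHalf n)).degree v := by
  rw [inDeg, ← card_neighborFinset_eq_degree, ← Set.ncard_coe_finset]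
  congr 1
  ext w
  simp only [Set.mem_ofPred_eq, coe_neighborFinset, mem_neighborSet, inf_adj, sideGraph_adj]
  exact ⟨fun h => ⟨h.1, G.ne_of_adj h.1, h.2⟩, fun h => ⟨h.1, h.2.2⟩⟩

theorem outDeg_eq_degree (G : SimpleGraph (Fin n)) (v : Fin n) :
    outDeg n G v = (G \ sideGraph (firstHalf n)).degree v := by
  rw [outDeg, ← card_neighborFinset_eq_degree, ← Set.ncard_coe_finset]
  congr 1
  ext w
  simp only [Set.mem_ofPred_eq, coe_neighborFinset, mem_neighborSet, sdiff_adj, sideGraph_adj]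
  exact ⟨fun h => ⟨h.1, fun h' => h.2 h'.2⟩,
    fun h => ⟨h.1, fun h' => h.2 ⟨G.ne_of_adj h.1, h'⟩⟩⟩

theorem LPfeasible.isOffDiagMetric {x : Fin n → Fin n → ℝ} (hx : LPfeasible n x) :
    IsOffDiagMetric x :=
  ⟨hx.1, hx.2.1⟩

theorem LPobj_eq_edgeSum_div_two (G : SimpleGraph (Fin n)) {x : Fin n → Fin n → ℝ}
    (hx : ∀ i j, x i j = x j i) : LPobj n G x = edgeSum G x / 2 := by
  rw [← two_mul_sum_lt_adj G hx, LPobj]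
  ring

theorem pairSum_eq_edgeSum_div_two {x : Fin n → Fin n → ℝ} (hx : ∀ i j, x i j = x j i) :
    pairSum n x = edgeSum ⊤ x / 2 := by
  rw [← two_mul_sum_lt_adj ⊤ hx, pairSum]
  simp only [top_adj, and_iff_left_of_imp ne_of_lt]
  ring

theorem cutVec_eq_cutVector : cutVec n = cutVector (firstHalf n) := by
  funext i j
  unfold cutVec cutVector
  congr

theorem cutVec_feasible (hn : Even n) : LPfeasible n (cutVec n) := by
  have hcut := isOffDiagMetric_cutVector (s := firstHalf n)
  rw [cutVec_eq_cutVector]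
  refine ⟨hcut.symm, hcut.triangle, fun i j k _ _ => cutVector_add_add_le_two i j k, ?_⟩
  have hdeg : ∀ v, ((⊤ \ sideGraph (firstHalf n)).degree v : ℝ) = n / 2 := fun v => by
    have h : (⊤ \ sideGraph (firstHalf n)).degree v = n / 2 :=
      compl_sideGraph_isRegularOfDegree card_firstHalf (card_not_firstHalf hn) v
    rw [h, Nat.cast_div_charZero hn.two_dvd, Nat.cast_ofNat]
  rw [pairSum_eq_edgeSum_div_two hcut.symm, edgeSum_cutVector]
  simp only [hdeg, sum_const, card_univ, Fintype.card_fin, nsmul_eq_mul]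
  ring

theorem LPobj_cutVec {G : SimpleGraph (Fin n)} {d : ℕ}
    (hG : (G \ sideGraph (firstHalf n)).IsRegularOfDegree d) :
    LPobj n G (cutVec n) = n * d / 2 := by
  rw [LPobj_eq_edgeSum_div_two G (cutVec_eq_cutVector ▸ isOffDiagMetric_cutVector).symm,
    cutVec_eq_cutVector, edgeSum_cutVector]
  simp [hG.degree_eq]

end PlantedBisection

theorem lp_optimality_regular_general (n : ℕ) (hn : Even n) (hn4 : 4 ≤ n)
    (G : SimpleGraph (Fin n)) (din dout : ℕ)
    (hreg12 : ∀ v : Fin n, inDeg n G v = din)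
    (hreg0 : ∀ v : Fin n, outDeg n G v = dout)
    (h : (din : ℝ) - (dout : ℝ) ≥ (n : ℝ) / 4 - 1) :
    LPfeasible n (cutVec n) ∧
      ∀ x : Fin n → Fin n → ℝ, LPfeasible n x →
        LPobj n G (cutVec n) ≤ LPobj n G x := by
  refine ⟨cutVec_feasible hn, fun x hx => ?_⟩
  set S := sideGraph (firstHalf n)
  have hmetric := hx.isOffDiagMetric
  have hnn : ∀ i j, i ≠ j → 0 ≤ x i j :=
    fun i j => hmetric.nonneg (by simp only [Fintype.card_fin]; omega)
  have hin : (G ⊓ S).IsRegularOfDegree din := fun v => inDeg_eq_degree G v ▸ hreg12 v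
  have hout : (G \ S).IsRegularOfDegree dout := fun v => outDeg_eq_degree G v ▸ hreg0 v
  have hcross := mul_edgeSum_compl_sideGraph_le hmetric (sdiff_eq (x := G) ▸ inf_le_right) hout
    (compl_sideGraph_isRegularOfDegree card_firstHalf (card_not_firstHalf hn))
  rw [Nat.cast_div_charZero hn.two_dvd] at hcross
  have hwithin := mul_edgeSum_sideGraph_sdiff_le hmetric hnn inf_le_right hin
    (sideGraph_isRegularOfDegree card_firstHalf (card_not_firstHalf hn))
  rw [Nat.cast_sub (by omega), Nat.cast_div_charZero hn.two_dvd, Nat.cast_one] at hwithin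
  have htotal : edgeSum S x + edgeSum Sᶜ x = n ^ 2 / 2 := by
    rw [edgeSum_add_edgeSum_compl]
    linarith [pairSum_eq_edgeSum_div_two hmetric.symm, hx.2.2.2]
  have hsplitS := edgeSum_add_edgeSum_sdiff_of_le (inf_le_right : G ⊓ S ≤ S) x
  have hsplitG := edgeSum_inf_add_edgeSum_sdiff G S x
  have key := two_mul_mul_le_of_crossing_of_within (ew := edgeSum (G ⊓ S) x)
    (eo := edgeSum (G \ S) x) (c := edgeSum Sᶜ x) (by positivity) (Nat.cast_nonneg dout)
    (edgeSum_nonneg hnn) (by linarith) (by linarith) (by rwa [hsplitS]) hwithin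
  rw [LPobj_cutVec hout, LPobj_eq_edgeSum_div_two G hmetric.symm]
  linarith

/-- If `G₁` and `G₂` are `d_in`-regular with
`d_in ∈ {1, …, n/2 - 1}`, `G₀` is `d_out`-regular with `d_out ∈ {0, …, n/2}`, and
`d_in - d_out ≥ n/4 - 1`, then the cut vector of the planted bisection is an optimal
solution of the metric LP relaxation (LP-P). -/
theorem lp_optimality_regular (n : ℕ) (hn : Even n) (hn4 : 4 ≤ n)
    (G : SimpleGraph (Fin n)) (din dout : ℕ)
    (hdin1 : 1 ≤ din) (hdin2 : din ≤ n / 2 - 1) (hdout : dout ≤ n / 2)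
    (hreg12 : ∀ v : Fin n, inDeg n G v = din)
    (hreg0 : ∀ v : Fin n, outDeg n G v = dout)
    (h : (din : ℝ) - (dout : ℝ) ≥ (n : ℝ) / 4 - 1) :
    LPfeasible n (cutVec n) ∧
      ∀ x : Fin n → Fin n → ℝ, LPfeasible n x →
        LPobj n G (cutVec n) ≤ LPobj n G x :=
  lp_optimality_regular_general n hn hn4 G din dout hreg12 hreg0 h
end
end

section
/- Let a graph on n nodes (n even) with planted bisection V1, V2 be described by the triple (G0, G1, G2), where G1, G2 are the induced subgraphs on V1, V2 and G0 is the bipartite graph of crossing edges. If the metric LP relaxation recovers the planted bisection for (G0, G1, G2), then it also recovers the planted bisection for (G̃0, G1, G2) whenever G̃0 is a bipartite graph on the same bipartition with E(G̃0) ⊆ E(G0). -/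
noncomputable section
open scoped Classical

lemma tri_sum {n : ℕ} {x : Fin n → Fin n → ℝ} (hx : LPfeasible n x)
    (i j k : Fin n) (hij : i ≠ j) (hik : i ≠ k) (hjk : j ≠ k) :
    x i j + x i k + x j k ≤ 2 := by
  obtain ⟨sym, tri, per, _⟩ := hx
  rcases lt_trichotomy i j with h1 | h1 | h1
  · rcases lt_trichotomy j k with h2 | h2 | h2
    · exact per i j k h1 h2
    · exact absurd h2 hjk
    · rcases lt_trichotomy i k with h3 | h3 | h3
      · have := per i k j h3 h2; linarith [sym j k]
      · exact absurd h3 hik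
      · have := per k i j h3 h1; linarith [sym i k, sym j k]
  · exact absurd h1 hij
  · rcases lt_trichotomy i k with h2 | h2 | h2
    · have := per j i k h1 h2; linarith [sym i j]
    · exact absurd h2 hik
    · rcases lt_trichotomy j k with h3 | h3 | h3
      · have := per j k i h3 h2; linarith [sym i j, sym i k]
      · exact absurd h3 hjk
      · have := per k j i h3 h1; linarith [sym i j, sym i k, sym j k]

lemma le_one {n : ℕ} {x : Fin n → Fin n → ℝ} (hx : LPfeasible n x)
    {i j : Fin n} (hij : i ≠ j) : x i j ≤ 1 := by
  by_cases h3 : 3 ≤ n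
  · obtain ⟨k, hk⟩ : ∃ k : Fin n, k ∉ ({i, j} : Finset (Fin n)) := by
      by_contra h
      push_neg at h
      have hsub : (Finset.univ : Finset (Fin n)) ⊆ {i, j} := fun k _ => h k
      have hcard := Finset.card_le_card hsub
      have h2 : ({i, j} : Finset (Fin n)).card ≤ 2 :=
        le_trans (Finset.card_insert_le _ _) (by simp)
      simp [Finset.card_univ] at hcard
      omega
    simp only [Finset.mem_insert, Finset.mem_singleton, not_or] at hk
    have hik : i ≠ k := fun h => hk.1 h.symm
    have hjk : j ≠ k := fun h => hk.2 h.symm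
    have ht := hx.2.1 i j k hij hik hjk
    have hs := tri_sum hx i j k hij hik hjk
    linarith
  · -- n ≤ 2, and i ≠ j in Fin n forces n = 2
    have h2 : 1 < Fintype.card (Fin n) :=
      Fintype.one_lt_card_iff_nontrivial.mpr ⟨⟨i, j, hij⟩⟩
    simp only [Fintype.card_fin] at h2
    have hn2 : n = 2 := by omega
    subst hn2
    have hps := hx.2.2.2
    have hsym := hx.1
    rw [pairSum, Fin.sum_univ_two, Fin.sum_univ_two, Fin.sum_univ_two] at hps
    norm_num [Fin.lt_def] at hps
    have key : x 0 1 ≤ 1 := le_of_eq hps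
    fin_cases i <;> fin_cases j <;> first
      | exact absurd rfl hij
      | exact key
      | (show x 1 0 ≤ 1; rw [hsym 1 0]; exact key)


/-- If the metric LP relaxation recovers the planted bisection for
the graph described by `(G₀, G₁, G₂)`, then it also recovers the planted bisection
after replacing `G₀` by any bipartite graph `G̃₀` on the same bipartition with
`E(G̃₀) ⊆ E(G₀)`.  Here `G` is the graph of `(G₀, G₁, G₂)` and `G'` is the graph of
`(G̃₀, G₁, G₂)`: the within-part edges of `G` and `G'` coincide, and the crossing
edges of `G'` form a subset of the crossing edges of `G`. -/
theorem lp_recovery_monotone_crossing (n : ℕ) (hn : Even n)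
    (G G' : SimpleGraph (Fin n))
    (hwithin : ∀ i j : Fin n, sameSide n i j → (G'.Adj i j ↔ G.Adj i j))
    (hcross : ∀ i j : Fin n, ¬ sameSide n i j → G'.Adj i j → G.Adj i j)
    (hrec : LPrecovers n G) :
    LPrecovers n G' := by
  have hsub : ∀ i j : Fin n, G'.Adj i j → G.Adj i j := by
    intro i j h
    by_cases hs : sameSide n i j
    · exact (hwithin i j hs).mp h
    · exact hcross i j hs h
  -- splitting the objective
  have hsplit : ∀ x : Fin n → Fin n → ℝ, LPobj n G x =
      LPobj n G' x + ∑ i : Fin n, ∑ j : Fin n,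
        (if i < j ∧ G.Adj i j ∧ ¬ G'.Adj i j then x i j else 0) := by
    intro x
    unfold LPobj
    rw [← Finset.sum_add_distrib]
    refine Finset.sum_congr rfl fun i _ => ?_
    rw [← Finset.sum_add_distrib]
    refine Finset.sum_congr rfl fun j _ => ?_
    by_cases h1 : i < j
    · by_cases h2 : G'.Adj i j
      · have h3 := hsub i j h2
        simp [h1, h2, h3]
      · by_cases h3 : G.Adj i j <;> simp [h1, h2, h3]
    · simp [h1]
  -- the removed-edge sum is bounded by its value at the cut vector
  have hRle : ∀ x : Fin n → Fin n → ℝ, LPfeasible n x →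
      (∑ i : Fin n, ∑ j : Fin n,
        (if i < j ∧ G.Adj i j ∧ ¬ G'.Adj i j then x i j else 0)) ≤
      (∑ i : Fin n, ∑ j : Fin n,
        (if i < j ∧ G.Adj i j ∧ ¬ G'.Adj i j then cutVec n i j else 0)) := by
    intro x hx
    refine Finset.sum_le_sum fun i _ => Finset.sum_le_sum fun j _ => ?_
    by_cases h : i < j ∧ G.Adj i j ∧ ¬ G'.Adj i j
    · simp only [h, if_true]
      have hss : ¬ sameSide n i j := by
        intro hs
        exact h.2.2 ((hwithin i j hs).mpr h.2.1)
      have hcv : cutVec n i j = 1 := by simp [cutVec, hss]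
      rw [hcv]
      exact le_one hx (ne_of_lt h.1)
    · simp [h]
  obtain ⟨hfeas, hopt⟩ := hrec
  refine ⟨hfeas, fun x hx => ?_⟩
  obtain ⟨hle, huniq⟩ := hopt x hx
  have e1 := hsplit x
  have e2 := hsplit (cutVec n)
  have hR := hRle x hx
  constructor
  · linarith
  · intro heq i j hij
    have hGeq : LPobj n G x = LPobj n G (cutVec n) := by linarith
    exact huniq hGeq i j hij
end
end

section
/- Let a graph on n nodes (n even) with planted bisection V1, V2 be described by the triple (G0, G1, G2). If the metric LP relaxation recovers the planted bisection for (G0, G1, G2), then it also recovers the planted bisection for (G0, G̃1, G̃2) whenever G̃1 and G̃2 are graphs on the node sets V1 and V2 with E(G̃1) ⊇ E(G1) and E(G̃2) ⊇ E(G2). -/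
noncomputable section
open scoped Classical

lemma lp_nonneg {n : ℕ} {x : Fin n → Fin n → ℝ} (hx : LPfeasible n x)
    (h3 : 3 ≤ n) {i j : Fin n} (hij : i ≠ j) : 0 ≤ x i j := by
  obtain ⟨hsym, htri, -, -⟩ := hx
  have hcard : ({i, j} : Finset (Fin n)).card ≤ 2 := by
    apply le_trans (Finset.card_insert_le _ _); simp
  have hne : (Finset.univ \ ({i, j} : Finset (Fin n))).Nonempty := by
    rw [← Finset.card_pos, Finset.card_sdiff_of_subset (Finset.subset_univ _)]
    simp only [Finset.card_univ, Fintype.card_fin]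
    omega
  obtain ⟨k, hk⟩ := hne
  simp only [Finset.mem_sdiff, Finset.mem_insert, Finset.mem_singleton] at hk
  have hki : k ≠ i := fun h => hk.2 (Or.inl h)
  have hkj : k ≠ j := fun h => hk.2 (Or.inr h)
  have h1 := htri i k j hki.symm hij hkj
  have h2 := htri j k i hkj.symm hij.symm hki
  have e1 : x k j = x j k := hsym k j
  have e2 : x k i = x i k := hsym k i
  have e3 : x j i = x i j := hsym j i
  linarith

lemma sameSide_three {n : ℕ} {i j : Fin n} (hij : i < j) (hs : sameSide n i j) :
    3 ≤ n := by
  have h1 : (i : ℕ) < (j : ℕ) := hij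
  have h2 : (j : ℕ) < n := j.isLt
  unfold sameSide at hs
  omega

/-- If the metric LP relaxation recovers the planted bisection for
the graph described by `(G₀, G₁, G₂)`, then it also recovers the planted bisection
after replacing `G₁, G₂` by graphs `G̃₁, G̃₂` on the same node sets with
`E(G̃₁) ⊇ E(G₁)` and `E(G̃₂) ⊇ E(G₂)`.  Here `G` is the graph of `(G₀, G₁, G₂)` and
`G'` is the graph of `(G₀, G̃₁, G̃₂)`: the crossing edges of `G` and `G'` coincide,
and the within-part edges of `G'` form a superset of the within-part edges of `G`. -/
theorem lp_recovery_monotone_within (n : ℕ) (hn : Even n)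
    (G G' : SimpleGraph (Fin n))
    (hwithin : ∀ i j : Fin n, sameSide n i j → G.Adj i j → G'.Adj i j)
    (hcross : ∀ i j : Fin n, ¬ sameSide n i j → (G'.Adj i j ↔ G.Adj i j))
    (hrec : LPrecovers n G) :
    LPrecovers n G' := by
  obtain ⟨hfeas, hopt⟩ := hrec
  have hle : ∀ i j : Fin n, G.Adj i j → G'.Adj i j := by
    intro i j h
    by_cases hs : sameSide n i j
    · exact hwithin i j hs h
    · exact (hcross i j hs).2 h
  have e1 : LPobj n G' (cutVec n) = LPobj n G (cutVec n) := by
    unfold LPobj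
    apply Finset.sum_congr rfl; intro i _
    apply Finset.sum_congr rfl; intro j _
    by_cases hs : sameSide n i j
    · have : cutVec n i j = 0 := by simp [cutVec, hs]
      rw [this]; simp
    · rw [hcross i j hs]
  have e2 : ∀ x : Fin n → Fin n → ℝ, LPfeasible n x →
      LPobj n G x ≤ LPobj n G' x := by
    intro x hx
    unfold LPobj
    apply Finset.sum_le_sum; intro i _
    apply Finset.sum_le_sum; intro j _
    by_cases hG : i < j ∧ G.Adj i j
    · rw [if_pos hG, if_pos ⟨hG.1, hle i j hG.2⟩]
    · rw [if_neg hG]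
      by_cases hG' : i < j ∧ G'.Adj i j
      · rw [if_pos hG']
        have hnG : ¬ G.Adj i j := fun h => hG ⟨hG'.1, h⟩
        have hs : sameSide n i j := by
          by_contra hs
          exact hnG ((hcross i j hs).1 hG'.2)
        exact lp_nonneg hx (sameSide_three hG'.1 hs) (ne_of_lt hG'.1)
      · rw [if_neg hG']
  refine ⟨hfeas, fun x hx => ?_⟩
  obtain ⟨hle1, huniq⟩ := hopt x hx
  have e2x := e2 x hx
  constructor
  · calc LPobj n G' (cutVec n) = LPobj n G (cutVec n) := e1
      _ ≤ LPobj n G x := hle1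
      _ ≤ LPobj n G' x := e2x
  · intro heq
    apply huniq
    linarith
end
end

section
/- Let G = (V,E) be a connected graph on n ≥ 5 nodes (n even) with a planted bisection, and define c(G) = max{0, (3ρ_max(G) − 4ρ_avg(G))/(1 − 4/n)}. If ((1 + c(G)) / (2ρ_avg(G) + 2c(G)(1 − 1/n))) · |E| < |E0|, then the metric LP relaxation does not recover the planted bisection: there exists a feasible point of (LP-P) whose objective value is strictly smaller than |E0|, the objective value of the planted cut vector. -/
noncomputable section
open scoped Classical

/-- The diameter `ρ_max(G)` of `G`: the maximum of the shortest-path distance over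
all pairs of nodes. -/
def rhoMax {n : ℕ} (G : SimpleGraph (Fin n)) : ℕ :=
  (Finset.univ : Finset (Fin n × Fin n)).sup (fun p => G.dist p.1 p.2)

/-- The average distance `ρ_avg(G) = (2/n²) ∑_{i<j} ρ_G(i,j)` of `G`. -/
def rhoAvg (n : ℕ) (G : SimpleGraph (Fin n)) : ℝ :=
  (2 / (n : ℝ) ^ 2) * pairSum n (fun i j => (G.dist i j : ℝ))

/-- The quantity `c(G) = max {0, (3ρ_max(G) - 4ρ_avg(G)) / (1 - 4/n)}`. -/
def cConst (n : ℕ) (G : SimpleGraph (Fin n)) : ℝ :=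
  max 0 ((3 * (rhoMax G : ℝ) - 4 * rhoAvg n G) / (1 - 4 / (n : ℝ)))

/-! The shifted and rescaled distance matrix `x_ij = (ρ_G(i,j) + c(G)) / γ`, with
`γ = 2ρ_avg(G) + 2c(G)(1 - 1/n)`, is feasible for (LP-P): the triangle inequalities are
those of the graph metric, the normalisation by `γ` is exactly the equipartition
constraint, and the shift by `c(G)` is exactly what gives `3(ρ_max + c) ≤ 2γ`, which
implies the perimeter inequalities. Every edge has `x_ij = (1 + c)/γ`, so the objective value of
this point is `(1 + c)/γ · |E| < |E₀|`, and the planted cut vector is not optimal. -/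

section DoubleSum

variable {ι : Type*} [Fintype ι]

theorem two_mul_sum_sum_eq_sum_sum_add_swap (f : ι → ι → ℝ) :
    2 * ∑ i, ∑ j, f i j = ∑ i, ∑ j, (f i j + f j i) := by
  simp only [Finset.sum_add_distrib]
  rw [Finset.sum_comm (f := fun i j => f j i)]
  ring

theorem sum_sum_eq_of_add_swap_eq {f g : ι → ι → ℝ}
    (h : ∀ i j, f i j + f j i = g i j + g j i) :
    ∑ i, ∑ j, f i j = ∑ i, ∑ j, g i j := by
  have hfg := two_mul_sum_sum_eq_sum_sum_add_swap f
  rw [show ∑ i, ∑ j, (f i j + f j i) = ∑ i, ∑ j, (g i j + g j i) by simp only [h],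
    ← two_mul_sum_sum_eq_sum_sum_add_swap g] at hfg
  linarith

end DoubleSum

theorem ite_lt_add_ite_lt_swap {ι : Type*} [LinearOrder ι] {p : ι → ι → Prop} [DecidableRel p]
    (hp : ∀ i j, p i j → p j i) (a : ℝ) (i j : ι) :
    ((if i < j ∧ p i j then a else 0) + if j < i ∧ p j i then a else 0) =
      if i ≠ j ∧ p i j then a else 0 := by
  rcases lt_trichotomy i j with h | rfl | h
  · by_cases hij : p i j <;> simp [h, h.ne, h.not_gt, hij]
  · simp
  · have hji : p j i ↔ p i j := ⟨hp j i, hp i j⟩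
    by_cases hij : p i j <;> simp [h, h.ne', h.not_gt, hji, hij]

theorem SimpleGraph.ncard_edgeSet_eq_sum_sum_lt {V : Type*} [Fintype V] [LinearOrder V]
    (G : SimpleGraph V) [DecidableRel G.Adj] :
    (G.edgeSet.ncard : ℝ) = ∑ i, ∑ j, if i < j ∧ G.Adj i j then 1 else 0 := by
  have hdeg : ∀ i, ∑ j, (if i ≠ j ∧ G.Adj i j then (1 : ℝ) else 0) = G.degree i := by
    intro i
    rw [Finset.sum_boole, ← G.card_neighborFinset_eq_degree, G.neighborFinset_eq_filter]
    congr 2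
    ext j
    simp [and_iff_right_of_imp G.ne_of_adj]
  have h2E := two_mul_sum_sum_eq_sum_sum_add_swap
    fun i j : V => if i < j ∧ G.Adj i j then (1 : ℝ) else 0
  simp only [ite_lt_add_ite_lt_swap (p := G.Adj) (fun _ _ h => h.symm), hdeg] at h2E
  have hsum : ∑ i, (G.degree i : ℝ) = 2 * G.edgeSet.ncard := by
    rw [Set.ncard_eq_toFinset_card', ← SimpleGraph.edgeFinset]
    exact_mod_cast G.sum_degrees_eq_twice_card_edges
  linarith

theorem single_le_pairSum {n : ℕ} {f : Fin n → Fin n → ℝ} (hf : ∀ i j, 0 ≤ f i j)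
    {i j : Fin n} (hij : i < j) : f i j ≤ pairSum n f := by
  have hnonneg : ∀ i j : Fin n, 0 ≤ if i < j then f i j else 0 := fun i j => by
    split_ifs
    exacts [hf i j, le_rfl]
  calc f i j = if i < j then f i j else 0 := (if_pos hij).symm
    _ ≤ ∑ j, if i < j then f i j else 0 :=
      Finset.single_le_sum (fun j _ => hnonneg i j) (Finset.mem_univ j)
    _ ≤ pairSum n f :=
      Finset.single_le_sum (fun i _ => Finset.sum_nonneg fun j _ => hnonneg i j)
        (Finset.mem_univ i)

theorem pairSum_const (n : ℕ) (c : ℝ) :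
    pairSum n (fun _ _ => c) = c * (((n : ℝ) ^ 2 - n) / 2) := by
  have h := two_mul_sum_sum_eq_sum_sum_add_swap
    fun i j : Fin n => if i < j ∧ True then c else 0
  simp only [ite_lt_add_ite_lt_swap (fun _ _ _ => trivial)] at h
  simp only [and_true] at h
  have hrow : ∀ i : Fin n, ∑ j, (if i ≠ j then c else 0) = (n - 1) * c := by
    intro i
    rw [Finset.sum_ite, Finset.sum_const_zero, add_zero, Finset.sum_const, Finset.filter_ne,
      Finset.card_erase_of_mem (Finset.mem_univ _), Finset.card_univ, Fintype.card_fin,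
      nsmul_eq_mul, Nat.cast_pred i.pos]
  simp only [hrow, Finset.sum_const, Finset.card_univ, Fintype.card_fin, nsmul_eq_mul] at h
  rw [pairSum]
  linear_combination h / 2

theorem pairSum_add_const_div (n : ℕ) (f : Fin n → Fin n → ℝ) (c γ : ℝ) :
    pairSum n (fun i j => (f i j + c) / γ) = (pairSum n f + pairSum n fun _ _ => c) / γ := by
  simp only [pairSum, Finset.sum_div, ← Finset.sum_add_distrib]
  refine Finset.sum_congr rfl fun i _ => Finset.sum_congr rfl fun j _ => ?_
  split_ifs <;> simp

theorem LPfeasible_add_const_div {n : ℕ} {d : Fin n → Fin n → ℝ} {M c γ : ℝ}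
    (hsymm : ∀ i j, d i j = d j i) (htri : ∀ i j k, d i j ≤ d i k + d j k)
    (hle : ∀ i j, d i j ≤ M) (hc : 0 ≤ c) (hγ : 0 < γ) (hper : 3 * (M + c) ≤ 2 * γ)
    (hsum : pairSum n d + c * (((n : ℝ) ^ 2 - n) / 2) = γ * ((n : ℝ) ^ 2 / 4)) :
    LPfeasible n (fun i j => (d i j + c) / γ) := by
  refine ⟨fun i j => congrArg (fun t => (t + c) / γ) (hsymm i j), fun i j k _ _ _ => ?_,
    fun i j k _ _ => ?_, ?_⟩
  · rw [← add_div, div_le_div_iff_of_pos_right hγ]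
    linarith [htri i j k]
  · rw [← add_div, ← add_div, div_le_iff₀ hγ]
    linarith [hle i j, hle i k, hle j k]
  · rw [pairSum_add_const_div, pairSum_const, hsum]
    field_simp

theorem LPobj_eq_mul_ncard_of_adj {n : ℕ} {G : SimpleGraph (Fin n)} {x : Fin n → Fin n → ℝ}
    {a : ℝ} (hx : ∀ i j, G.Adj i j → x i j = a) :
    LPobj n G x = a * G.edgeSet.ncard := by
  rw [G.ncard_edgeSet_eq_sum_sum_lt, Finset.mul_sum]
  refine Finset.sum_congr rfl fun i _ => ?_
  rw [Finset.mul_sum]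
  refine Finset.sum_congr rfl fun j _ => ?_
  split_ifs with h
  · rw [hx i j h.2, mul_one]
  · rw [mul_zero]

theorem LPobj_cutVecOf {n : ℕ} (G : SimpleGraph (Fin n)) (S : Finset (Fin n)) :
    LPobj n G (cutVecOf S) = cutCost G S := by
  rw [cutCost, Finset.card_filter, Nat.cast_sum, Fintype.sum_prod_type, LPobj]
  apply sum_sum_eq_of_add_swap_eq
  intro i j
  by_cases hA : G.Adj i j
  · rcases hA.ne.lt_or_gt with h | h <;> by_cases hi : i ∈ S <;> by_cases hj : j ∈ S <;>
      simp [cutVecOf, hA, hA.symm, hi, hj, h, h.not_gt]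
  · simp [hA, mt G.adj_symm hA]

theorem not_LPrecoversOf_of_LPobj_lt {n : ℕ} {G : SimpleGraph (Fin n)}
    {x xb : Fin n → Fin n → ℝ} (hx : LPfeasible n x) (hlt : LPobj n G x < LPobj n G xb) :
    ¬ LPrecoversOf n G xb :=
  fun h => (h.2 x hx).1.not_gt hlt

def distScale (n : ℕ) (G : SimpleGraph (Fin n)) : ℝ :=
  2 * rhoAvg n G + 2 * cConst n G * (1 - 1 / (n : ℝ))

section GraphMetric

variable {n : ℕ} (G : SimpleGraph (Fin n))

theorem dist_le_rhoMax (i j : Fin n) : G.dist i j ≤ rhoMax G :=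
  Finset.le_sup (f := fun p : Fin n × Fin n => G.dist p.1 p.2) (Finset.mem_univ (i, j))

theorem pairSum_dist_eq (hn : n ≠ 0) :
    pairSum n (fun i j => (G.dist i j : ℝ)) = rhoAvg n G * ((n : ℝ) ^ 2 / 2) := by
  rw [rhoAvg]
  field_simp

theorem rhoAvg_pos (hn : 2 ≤ n) (hconn : G.Connected) : 0 < rhoAvg n G := by
  have h01 : (⟨0, by omega⟩ : Fin n) < ⟨1, hn⟩ := Fin.mk_lt_mk.mpr zero_lt_one
  have hD : 1 ≤ pairSum n (fun i j => (G.dist i j : ℝ)) :=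
    (Nat.one_le_cast.mpr (hconn.pos_dist_of_ne h01.ne)).trans
      (single_le_pairSum (fun _ _ => Nat.cast_nonneg _) h01)
  have hn' : (0 : ℝ) < n := by exact_mod_cast (by omega : 0 < n)
  rw [rhoAvg]
  positivity

theorem cConst_nonneg : 0 ≤ cConst n G :=
  le_max_left _ _

theorem distScale_pos (hn : 2 ≤ n) (hconn : G.Connected) : 0 < distScale n G := by
  have hn' : (1 : ℝ) ≤ n := by exact_mod_cast (by omega : 1 ≤ n)
  have h : 0 ≤ 1 - 1 / (n : ℝ) := by
    rw [sub_nonneg, div_le_one (by linarith)]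
    exact hn'
  have := rhoAvg_pos G hn hconn
  have := cConst_nonneg G
  rw [distScale]
  positivity

theorem three_mul_rhoMax_add_cConst_le (hn : 4 < n) :
    3 * ((rhoMax G : ℝ) + cConst n G) ≤ 2 * distScale n G := by
  have hn' : (4 : ℝ) < n := by exact_mod_cast hn
  have hpos : 0 < 1 - 4 / (n : ℝ) := by
    rw [sub_pos, div_lt_one (by linarith)]
    exact hn'
  have hc : 3 * (rhoMax G : ℝ) - 4 * rhoAvg n G ≤ cConst n G * (1 - 4 / (n : ℝ)) :=
    (div_le_iff₀ hpos).mp (le_max_right _ _)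
  rw [distScale]
  linear_combination hc

theorem LPfeasible_dist_add_cConst_div (hn : 4 < n) (hconn : G.Connected) :
    LPfeasible n fun i j => ((G.dist i j : ℝ) + cConst n G) / distScale n G := by
  refine LPfeasible_add_const_div (fun i j => by rw [G.dist_comm]) (fun i j k => ?_)
    (fun i j => Nat.cast_le.mpr (dist_le_rhoMax G i j)) (cConst_nonneg G)
    (distScale_pos G (by omega) hconn) (three_mul_rhoMax_add_cConst_le G hn) ?_
  · exact_mod_cast hconn.dist_triangle.trans_eq (by rw [G.dist_comm (u := k)])
  · rw [pairSum_dist_eq G (by omega), distScale]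
    field_simp
    ring

theorem LPobj_dist_add_cConst_div :
    LPobj n G (fun i j => ((G.dist i j : ℝ) + cConst n G) / distScale n G) =
      (1 + cConst n G) / distScale n G * G.edgeSet.ncard :=
  LPobj_eq_mul_ncard_of_adj fun i j h => by rw [G.dist_eq_one_iff_adj.mpr h, Nat.cast_one]

end GraphMetric

theorem lp_nonrecovery_condition_general (n : ℕ) (hn5 : 5 ≤ n)
    (G : SimpleGraph (Fin n)) (hconn : G.Connected)
    (V1 : Finset (Fin n))
    (hlt : (1 + cConst n G) / (2 * rhoAvg n G + 2 * cConst n G * (1 - 1 / (n : ℝ))) *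
        (G.edgeSet.ncard : ℝ) < (cutCost G V1 : ℝ)) :
    (∃ x : Fin n → Fin n → ℝ, LPfeasible n x ∧ LPobj n G x < (cutCost G V1 : ℝ)) ∧
      ¬ LPrecoversOf n G (cutVecOf V1) := by
  have hfeas := LPfeasible_dist_add_cConst_div G hn5 hconn
  have hobj : LPobj n G _ < cutCost G V1 := (LPobj_dist_add_cConst_div G).trans_lt hlt
  exact ⟨⟨_, hfeas, hobj⟩, not_LPrecoversOf_of_LPobj_lt hfeas (by rwa [LPobj_cutVecOf])⟩

/-- Let `G` be a connected graph on `n ≥ 5` nodes (`n` even) with a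
planted bisection `(V₁, V₁ᶜ)`, `|V₁| = n/2`.  If
`((1 + c(G)) / (2ρ_avg(G) + 2c(G)(1 - 1/n))) · |E| < |E₀|`, then the metric LP
relaxation does not recover the planted bisection: there is a feasible point of
(LP-P) with objective value strictly smaller than `|E₀|`, the objective value of
the planted cut vector. -/
theorem lp_nonrecovery_condition (n : ℕ) (hn : Even n) (hn5 : 5 ≤ n)
    (G : SimpleGraph (Fin n)) (hconn : G.Connected)
    (V1 : Finset (Fin n)) (hV1 : V1.card = n / 2)
    (hlt : (1 + cConst n G) / (2 * rhoAvg n G + 2 * cConst n G * (1 - 1 / (n : ℝ))) *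
        (G.edgeSet.ncard : ℝ) < (cutCost G V1 : ℝ)) :
    (∃ x : Fin n → Fin n → ℝ, LPfeasible n x ∧ LPobj n G x < (cutCost G V1 : ℝ)) ∧
      ¬ LPrecoversOf n G (cutVecOf V1) :=
  lp_nonrecovery_condition_general n hn5 G hconn V1 hlt
end
end

section
/- Let 0 < q < p < 1 be constants with p − q > 1/2. Then, with high probability (as n → ∞ along even n), for G drawn from the stochastic block model 𝒢_{n,p,q} the metric LP relaxation recovers the planted bisection: the cut vector of the planted bisection is the unique optimal solution of (LP-P). -/
open MeasureTheory Filter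

noncomputable section
open scoped Classical ENNReal

/-- The Bernoulli measure on `Bool` with success probability `p` (a real number,
truncated to `[0,1]`). -/
def bern (p : ℝ) : MeasureTheory.Measure Bool :=
  (PMF.bernoulli (min (Real.toNNReal p) 1) (min_le_right _ _)).toMeasure

instance (p : ℝ) : MeasureTheory.IsProbabilityMeasure (bern p) :=
  PMF.toMeasure.isProbabilityMeasure _

/-- The distribution of a random graph on `Fin n` in which, independently for every
ordered pair `(i, j)` with `i < j`, the pair is an edge with probability `pe (i, j)`:
the product of Bernoulli measures on the family of edge indicators. -/
def graphMeasure (n : ℕ) (pe : Fin n × Fin n → ℝ) :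
    MeasureTheory.Measure (Fin n × Fin n → Bool) :=
  MeasureTheory.Measure.pi (fun ij => bern (pe ij))

/-- The graph on `Fin n` determined by the edge indicators `ω`: `i` and `j` are
adjacent iff the indicator of the ordered pair `(min i j, max i j)` is `true`. -/
def graphOf {n : ℕ} (ω : Fin n × Fin n → Bool) : SimpleGraph (Fin n) :=
  SimpleGraph.fromRel (fun i j => i < j ∧ ω (i, j) = true)

/-- Edge probabilities of the Erdős–Rényi model `𝒢_{n,p}`. -/
def erPe (n : ℕ) (p : ℝ) : Fin n × Fin n → ℝ :=
  fun ij => if ij.1 < ij.2 then p else 0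

/-- Edge probabilities of the stochastic block model `𝒢_{n,p,q}` with planted
bisection `V₁ = {0, …, n/2 - 1}`, `V₂ = {n/2, …, n-1}`: each pair of nodes within
`V₁` or within `V₂` is an edge with probability `p`, and each pair with one node in
`V₁` and one in `V₂` is an edge with probability `q`. -/
def sbmPe (n : ℕ) (p q : ℝ) : Fin n × Fin n → ℝ :=
  fun ij => if ij.1 < ij.2 then (if sameSide n ij.1 ij.2 then p else q) else 0

/-- Edge probabilities of the bipartite Erdős–Rényi model `𝒢_{n,0,q}`. -/
def bipPe (n : ℕ) (q : ℝ) : Fin n × Fin n → ℝ := sbmPe n 0 q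

open Finset ProbabilityTheory Real

/-!
For a feasible `x` and a vertex `v` put `Z v = ∑_{k across} (1 - x v k)` and
`Y v = ∑_{j ≠ v beside} x v j`. The perimeter inequalities give `Z v ≥ 0` and the
equipartition constraint gives `∑ Z = ∑ Y`. Running the perimeter (resp. triangle)
inequality through the `m` vertices of one side bounds `m x i j` by `Z i + Z j` for `i, j`
on a common side and `m (1 - x i k)` by `Y i + Z k` for `i, k` on opposite sides.
So if every vertex has at most `α m` neighbours across and at most `β m` non-neighbours
beside it, twice the objective gap to the planted cut is at least `(1 - 2α - 2β) ∑ Y`,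
which is positive unless `x` is the cut vector.

In `𝒢_{n,p,q}` these degree bounds hold with `α = q + ε`, `β = 1 - p + ε` with probability
at least `1 - 4 m e^{-2ε²m}` (Hoeffding's inequality and a union bound over vertices), and
`2α + 2β < 1` for small `ε` is exactly `p - q > 1/2`.
-/

lemma sum_sum_le_of_mul_le_add {ι : Type*} [Fintype ι] (N : ι → Finset ι)
    (hN : ∀ v k, k ∈ N v ↔ v ∈ N k) {m γ : ℝ} (hm : 0 < m) (hdeg : ∀ v, (#(N v) : ℝ) ≤ γ * m) {a b : ι → ℝ}
    (ha : ∀ v, 0 ≤ a v) (hb : ∀ v, 0 ≤ b v) {w : ι → ι → ℝ}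
    (hw : ∀ v, ∀ k ∈ N v, m * w v k ≤ a v + b k) :
    ∑ v, ∑ k ∈ N v, w v k ≤ γ * (∑ v, a v + ∑ v, b v) := by
  have hswap : ∑ v, ∑ k ∈ N v, b k = ∑ k, #(N k) * b k := by
    rw [sum_comm' (t' := univ) (s' := N) (fun v k => by simpa using hN v k)]
    simp
  have hendpoints : ∑ v, ∑ k ∈ N v, (a v + b k) ≤ γ * m * (∑ v, a v + ∑ v, b v) := by
    rw [mul_add, mul_sum, mul_sum]
    simp only [sum_add_distrib, sum_const, nsmul_eq_mul, hswap]
    gcongr <;> simp only [ha, hb, hdeg]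
  have : m * ∑ v, ∑ k ∈ N v, w v k ≤ m * (γ * (∑ v, a v + ∑ v, b v)) := by
    rw [mul_sum]
    calc ∑ v, m * ∑ k ∈ N v, w v k = ∑ v, ∑ k ∈ N v, m * w v k := by simp only [mul_sum]
      _ ≤ ∑ v, ∑ k ∈ N v, (a v + b k) := by gcongr with v _ k hk; exact hw v k hk
      _ ≤ _ := by linarith
  exact le_of_mul_le_mul_left this hm

lemma two_mul_sum_ite_lt {n : ℕ} (f : Fin n → Fin n → ℝ) (hf : ∀ i j, f i j = f j i) :
    2 * ∑ i, ∑ j, (if i < j then f i j else 0) = ∑ i, ∑ j ∈ univ.erase i, f i j := by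
  have hflip : ∑ i, ∑ j, (if j < i then f i j else 0) = ∑ i, ∑ j, (if i < j then f i j else 0) := by
    rw [sum_comm]; simp only [hf]
  calc 2 * ∑ i, ∑ j, (if i < j then f i j else 0)
      = ∑ i, ∑ j, ((if i < j then f i j else 0) + if j < i then f i j else 0) := by
        rw [two_mul]; nth_rw 2 [← hflip]; simp only [sum_add_distrib]
    _ = ∑ i, ∑ j ∈ univ.erase i, f i j := by
        refine sum_congr rfl fun i _ => ?_
        rw [← filter_ne', sum_filter]
        refine sum_congr rfl fun j _ => ?_
        rcases lt_trichotomy i j with h | rfl | h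
        · simp [h, h.ne', h.not_gt]
        · simp
        · simp [h, h.ne, h.not_gt]

namespace LPfeasible

variable {n : ℕ} {x : Fin n → Fin n → ℝ}

lemma nonneg (hx : LPfeasible n x) (hn : 3 ≤ n) {i j : Fin n} (hij : i ≠ j) : 0 ≤ x i j := by
  obtain ⟨k, hk⟩ : ({i, j}ᶜ : Finset (Fin n)).Nonempty := by
    rw [← card_pos, card_compl, Fintype.card_fin]
    have := card_le_two (a := i) (b := j)
    omega
  simp only [mem_compl, mem_insert, mem_singleton, not_or] at hk
  obtain ⟨hsym, htri, -, -⟩ := hx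
  linarith [htri k i j hk.1 hk.2 hij, htri k j i hk.2 hk.1 hij.symm, hsym i j]

lemma perimeter (hx : LPfeasible n x) {i j k : Fin n} (hij : i ≠ j) (hik : i ≠ k)
    (hjk : j ≠ k) : x i j + x i k + x j k ≤ 2 := by
  obtain ⟨hsym, -, hper, -⟩ := hx
  have := hsym i j; have := hsym i k; have := hsym j k
  rcases hij.lt_or_gt with h₁ | h₁ <;> rcases hik.lt_or_gt with h₂ | h₂ <;>
    rcases hjk.lt_or_gt with h₃ | h₃
  all_goals first
    | order
    | linarith [hper _ _ _ h₁ h₂] | linarith [hper _ _ _ h₁ h₃] | linarith [hper _ _ _ h₂ h₁]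
    | linarith [hper _ _ _ h₂ h₃] | linarith [hper _ _ _ h₃ h₁] | linarith [hper _ _ _ h₃ h₂]

end LPfeasible

namespace Bisection

variable {n : ℕ} (S : Finset (Fin n))

def otherSide (v : Fin n) : Finset (Fin n) := univ.filter fun k => ¬(k ∈ S ↔ v ∈ S)

/-- Excludes `v` itself: (LP-P) does not constrain the diagonal entries `x v v`. -/
def ownSide (v : Fin n) : Finset (Fin n) := univ.filter fun k => k ≠ v ∧ (k ∈ S ↔ v ∈ S)

variable {S}

@[simp] lemma mem_otherSide {v k : Fin n} : k ∈ otherSide S v ↔ ¬(k ∈ S ↔ v ∈ S) := by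
  simp [otherSide]

@[simp] lemma mem_ownSide {v k : Fin n} : k ∈ ownSide S v ↔ k ≠ v ∧ (k ∈ S ↔ v ∈ S) := by
  simp [ownSide]

lemma card_otherSide (hS : n = 2 * #S) (v : Fin n) : #(otherSide S v) = #S := by
  by_cases hv : v ∈ S
  · rw [show otherSide S v = Sᶜ by ext; simp [hv], card_compl, Fintype.card_fin]
    omega
  · rw [show otherSide S v = S by ext; simp [hv]]

lemma ownSide_eq_erase (v : Fin n) : ownSide S v = (otherSide S v)ᶜ.erase v := by
  ext k; simp

lemma card_ownSide (hS : n = 2 * #S) (v : Fin n) : #(ownSide S v) = #S - 1 := by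
  rw [ownSide_eq_erase, card_erase_of_mem (by simp), card_compl, Fintype.card_fin,
    card_otherSide hS]
  omega

lemma otherSide_eq_of_iff {i j : Fin n} (h : i ∈ S ↔ j ∈ S) : otherSide S i = otherSide S j := by
  ext k; simp [h]

lemma otherSide_eq_insert_ownSide {i k : Fin n} (h : ¬(i ∈ S ↔ k ∈ S)) :
    otherSide S k = insert i (ownSide S i) := by
  ext j
  by_cases hj : j = i
  · simp [hj, h]
  · simp only [mem_otherSide, mem_insert, hj, mem_ownSide, ne_eq, not_false_eq_true, true_and,
      false_or]
    tauto

lemma sum_erase_eq_sum_ownSide_add (v : Fin n) (f : Fin n → ℝ) :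
    ∑ j ∈ univ.erase v, f j = ∑ j ∈ ownSide S v, f j + ∑ k ∈ otherSide S v, f k := by
  rw [← sum_union (disjoint_left.mpr fun k => by simp +contextual)]
  congr 1
  ext k
  rcases eq_or_ne k v with rfl | hk
  · simp
  · simp [hk, em]

variable {x : Fin n → Fin n → ℝ}

variable (S) in
def crossDeficit (x : Fin n → Fin n → ℝ) (v : Fin n) : ℝ := ∑ k ∈ otherSide S v, (1 - x v k)

variable (S) in
def sideMass (x : Fin n → Fin n → ℝ) (v : Fin n) : ℝ := ∑ j ∈ ownSide S v, x v j

lemma sideMass_nonneg (hx : LPfeasible n x) (hn : 3 ≤ n) (v : Fin n) : 0 ≤ sideMass S x v :=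
  sum_nonneg fun _ hj => hx.nonneg hn (mem_ownSide.mp hj).1.symm

lemma crossDeficit_nonneg (hx : LPfeasible n x) (hS : n = 2 * #S) (hm : 2 ≤ #S) (v : Fin n) :
    0 ≤ crossDeficit S x v := by
  set O := otherSide S v
  set g : Fin n → ℝ := fun k => 1 - x v k
  have hpair : ∀ k ∈ O, 2 * g k ≤ ∑ k' ∈ O, (g k + g k') := by
    intro k hk
    rw [← add_sum_erase _ _ hk, ← two_mul, le_add_iff_nonneg_right]
    refine sum_nonneg fun k' hk' => ?_
    have hk'k := ne_of_mem_erase hk'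
    have hkv : k ≠ v := by rintro rfl; simp [O] at hk
    have hk'v : k' ≠ v := by rintro rfl; simp [O] at hk'
    linarith [hx.perimeter hkv.symm hk'v.symm hk'k.symm, hx.nonneg (by omega) hk'k.symm]
  have hsum : ∑ k ∈ O, ∑ k' ∈ O, (g k + g k') = 2 * #S * crossDeficit S x v := by
    simp only [sum_add_distrib, sum_const, card_otherSide hS, nsmul_eq_mul, ← mul_sum, O]
    unfold crossDeficit; ring
  have hdouble : 2 * crossDeficit S x v ≤ 2 * #S * crossDeficit S x v := by
    rw [← hsum, crossDeficit, mul_sum]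
    exact sum_le_sum hpair
  have hm' : (2 : ℝ) ≤ #S := by exact_mod_cast hm
  nlinarith

lemma sum_crossDeficit_eq_sum_sideMass (hx : LPfeasible n x) (hS : n = 2 * #S) :
    ∑ v, crossDeficit S x v = ∑ v, sideMass S x v := by
  obtain ⟨hsym, -, -, hsum⟩ := hx
  have h := two_mul_sum_ite_lt x hsym
  simp only [sum_erase_eq_sum_ownSide_add (S := S)] at h
  rw [← pairSum, hsum, sum_add_distrib] at h
  have hother : ∀ v, ∑ k ∈ otherSide S v, x v k = #S - crossDeficit S x v := by
    intro v
    simp [crossDeficit, card_otherSide hS]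
  simp only [hother, sum_sub_distrib, sum_const, card_univ, Fintype.card_fin, nsmul_eq_mul] at h
  have hn : (n : ℝ) = 2 * #S := by exact_mod_cast hS
  rw [hn] at h
  unfold sideMass
  linarith

lemma mul_le_crossDeficit_add (hx : LPfeasible n x) (hS : n = 2 * #S) {i j : Fin n} (hij : i ≠ j)
    (hside : i ∈ S ↔ j ∈ S) : #S * x i j ≤ crossDeficit S x i + crossDeficit S x j := by
  have hstep : ∀ k ∈ otherSide S i, x i j ≤ (1 - x i k) + (1 - x j k) := by
    intro k hk
    rw [mem_otherSide] at hk
    have hki : i ≠ k := by rintro rfl; exact hk Iff.rfl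
    have hkj : j ≠ k := by rintro rfl; exact hk hside.symm
    linarith [hx.perimeter hij hki hkj]
  have := sum_le_sum hstep
  rw [sum_const, card_otherSide hS, nsmul_eq_mul, sum_add_distrib] at this
  unfold crossDeficit
  rwa [otherSide_eq_of_iff hside] at this ⊢

lemma mul_one_sub_le_sideMass_add (hx : LPfeasible n x) (hS : n = 2 * #S) {i k : Fin n}
    (hside : ¬(i ∈ S ↔ k ∈ S)) : #S * (1 - x i k) ≤ sideMass S x i + crossDeficit S x k := by
  obtain ⟨hsym, htri, -, -⟩ := hx
  have hik : i ≠ k := by rintro rfl; exact hside Iff.rfl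
  have hstep : ∀ j ∈ ownSide S i, 1 - x i k ≤ x i j + (1 - x k j) := by
    intro j hj
    obtain ⟨hji, hjs⟩ := mem_ownSide.mp hj
    have hjk : j ≠ k := by rintro rfl; exact hside hjs.symm
    linarith [htri j k i hjk hji hik.symm, hsym j i, hsym k i, hsym k j]
  have hsum := sum_le_sum hstep
  have hm : 1 ≤ #S := by have := i.pos; omega
  rw [sum_const, card_ownSide hS, nsmul_eq_mul, sum_add_distrib, Nat.cast_sub hm,
    Nat.cast_one] at hsum
  rw [sideMass, crossDeficit, otherSide_eq_insert_ownSide hside, sum_insert (by simp), hsym k i]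
  linarith

variable (S) in
def crossNbrs (G : SimpleGraph (Fin n)) (v : Fin n) : Finset (Fin n) :=
  (otherSide S v).filter (G.Adj v)

variable (S) in
def ownNonNbrs (G : SimpleGraph (Fin n)) (v : Fin n) : Finset (Fin n) :=
  (ownSide S v).filter (¬G.Adj v ·)

variable {G : SimpleGraph (Fin n)}

lemma mem_crossNbrs_comm {v k : Fin n} : k ∈ crossNbrs S G v ↔ v ∈ crossNbrs S G k := by
  simp only [crossNbrs, mem_filter, mem_otherSide, G.adj_comm v k]
  tauto

lemma mem_ownNonNbrs_comm {v k : Fin n} : k ∈ ownNonNbrs S G v ↔ v ∈ ownNonNbrs S G k := by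
  simp only [ownNonNbrs, mem_filter, mem_ownSide, G.adj_comm v k]
  grind

lemma sum_erase_adj_eq (v : Fin n) (x : Fin n → Fin n → ℝ) :
    ∑ j ∈ univ.erase v, (if G.Adj v j then x v j else 0) =
      sideMass S x v - ∑ j ∈ ownNonNbrs S G v, x v j + ∑ k ∈ crossNbrs S G v, x v k := by
  rw [sum_erase_eq_sum_ownSide_add (S := S), ← sum_filter, ← sum_filter, sideMass,
    ← sum_filter_add_sum_filter_not (ownSide S v) (G.Adj v)]
  simp only [ownNonNbrs, crossNbrs]
  ring

lemma two_mul_LPobj (x : Fin n → Fin n → ℝ) (hsym : ∀ i j, x i j = x j i) :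
    2 * LPobj n G x = ∑ v, (sideMass S x v - ∑ j ∈ ownNonNbrs S G v, x v j
      + ∑ k ∈ crossNbrs S G v, x v k) := by
  have h := two_mul_sum_ite_lt (fun i j => if G.Adj i j then x i j else 0)
    (fun i j => by simp only [G.adj_comm i j, hsym i j])
  simp only [sum_erase_adj_eq (S := S)] at h
  rw [← h, LPobj]
  simp only [ite_and]

lemma cutVecOf_of_mem_ownSide {v j : Fin n} (hj : j ∈ ownSide S v) : cutVecOf S v j = 0 :=
  if_pos (mem_ownSide.mp hj).2.symm

lemma cutVecOf_of_mem_otherSide {v k : Fin n} (hk : k ∈ otherSide S v) : cutVecOf S v k = 1 :=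
  if_neg fun h => mem_otherSide.mp hk h.symm

lemma LPfeasible_cutVecOf (hS : n = 2 * #S) : LPfeasible n (cutVecOf S) := by
  refine ⟨fun i j => by simp only [cutVecOf, Iff.comm], fun i j k _ _ _ => ?_,
    fun i j k _ _ => ?_, ?_⟩
  · by_cases hi : i ∈ S <;> by_cases hj : j ∈ S <;> by_cases hk : k ∈ S <;>
      norm_num [cutVecOf, hi, hj, hk]
  · by_cases hi : i ∈ S <;> by_cases hj : j ∈ S <;> by_cases hk : k ∈ S <;>
      norm_num [cutVecOf, hi, hj, hk]
  · have h := two_mul_sum_ite_lt (cutVecOf S) fun i j => by simp only [cutVecOf, Iff.comm]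
    have hrow : ∀ v, ∑ j ∈ univ.erase v, cutVecOf S v j = #S := fun v => by
      rw [sum_erase_eq_sum_ownSide_add (S := S), sum_eq_zero fun j => cutVecOf_of_mem_ownSide,
        sum_congr rfl fun k => cutVecOf_of_mem_otherSide]
      simp [card_otherSide hS]
    simp only [hrow, sum_const, card_univ, Fintype.card_fin, nsmul_eq_mul] at h
    have hn : (n : ℝ) = 2 * #S := by exact_mod_cast hS
    rw [pairSum, hn]
    rw [hn] at h
    linarith

variable {α β : ℝ}

lemma sum_sideMass_le_two_mul_LPobj_sub (hx : LPfeasible n x) (hS : n = 2 * #S) (hm : 2 ≤ #S)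
    (hcross : ∀ v, (#(crossNbrs S G v) : ℝ) ≤ α * #S)
    (hnon : ∀ v, (#(ownNonNbrs S G v) : ℝ) ≤ β * #S) :
    (1 - 2 * α - 2 * β) * ∑ v, sideMass S x v ≤
      2 * (LPobj n G x - LPobj n G (cutVecOf S)) := by
  have hn : 3 ≤ n := by omega
  have hm0 : (0 : ℝ) < #S := by exact_mod_cast (by omega : 0 < #S)
  have hZY := sum_crossDeficit_eq_sum_sideMass hx hS
  have hnonSum : ∑ v, ∑ j ∈ ownNonNbrs S G v, x v j ≤ β * (2 * ∑ v, sideMass S x v) := by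
    rw [two_mul, ← hZY]
    refine sum_sum_le_of_mul_le_add _ (fun _ _ => mem_ownNonNbrs_comm) hm0 hnon
      (crossDeficit_nonneg hx hS hm) (crossDeficit_nonneg hx hS hm) fun v j hj => ?_
    obtain ⟨hjv, hside⟩ := mem_ownSide.mp (mem_filter.mp hj).1
    exact mul_le_crossDeficit_add hx hS hjv.symm hside.symm
  have hcrossSum : ∑ v, ∑ k ∈ crossNbrs S G v, (1 - x v k) ≤
      α * (2 * ∑ v, sideMass S x v) := by
    rw [two_mul]; nth_rw 2 [← hZY]
    refine sum_sum_le_of_mul_le_add _ (fun _ _ => mem_crossNbrs_comm) hm0 hcross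
      (sideMass_nonneg hx hn) (crossDeficit_nonneg hx hS hm) fun v k hk => ?_
    exact mul_one_sub_le_sideMass_add hx hS fun h => mem_otherSide.mp (mem_filter.mp hk).1 h.symm
  have hcut : 2 * LPobj n G (cutVecOf S) = ∑ v, (#(crossNbrs S G v) : ℝ) := by
    rw [two_mul_LPobj (S := S) _ (LPfeasible_cutVecOf hS).1]
    refine sum_congr rfl fun v _ => ?_
    rw [sideMass, ownNonNbrs, crossNbrs, sum_eq_zero fun j => cutVecOf_of_mem_ownSide,
      sum_eq_zero fun j hj => cutVecOf_of_mem_ownSide (mem_filter.mp hj).1,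
      sum_congr rfl fun k hk => cutVecOf_of_mem_otherSide (mem_filter.mp hk).1]
    simp
  have hx' : 2 * LPobj n G x = ∑ v, sideMass S x v - ∑ v, ∑ j ∈ ownNonNbrs S G v, x v j
      + (∑ v, (#(crossNbrs S G v) : ℝ) - ∑ v, ∑ k ∈ crossNbrs S G v, (1 - x v k)) := by
    rw [two_mul_LPobj (S := S) _ hx.1]
    simp only [sum_sub_distrib, sum_add_distrib, sum_const, nsmul_eq_mul, mul_one]
    ring
  linarith

lemma eq_cutVecOf_of_sum_sideMass_eq_zero (hx : LPfeasible n x) (hS : n = 2 * #S) (hm : 2 ≤ #S)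
    (hT : ∑ v, sideMass S x v = 0) {i j : Fin n} (hij : i ≠ j) : x i j = cutVecOf S i j := by
  have hY : ∀ v, sideMass S x v = 0 := fun v =>
    (sum_eq_zero_iff_of_nonneg fun v _ => sideMass_nonneg hx (by omega) v).mp hT v (mem_univ v)
  have hZ : ∀ v, crossDeficit S x v = 0 := fun v =>
    (sum_eq_zero_iff_of_nonneg fun v _ => crossDeficit_nonneg hx hS hm v).mp
      ((sum_crossDeficit_eq_sum_sideMass hx hS).trans hT) v (mem_univ v)
  have hm0 : (0 : ℝ) < #S := by exact_mod_cast (by omega : 0 < #S)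
  by_cases hside : i ∈ S ↔ j ∈ S
  · have h := mul_le_crossDeficit_add hx hS hij hside
    rw [hZ, hZ, add_zero] at h
    rw [cutVecOf, if_pos hside]
    nlinarith [hx.nonneg (by omega) hij]
  · have hle : ∀ k ∈ otherSide S i, 1 - x i k ≤ 0 := fun k hk => by
      have h := mul_one_sub_le_sideMass_add hx hS fun h => mem_otherSide.mp hk h.symm
      rw [hY, hZ, add_zero] at h
      nlinarith
    have := (sum_eq_zero_iff_of_nonpos hle).mp (hZ i) j (mem_otherSide.mpr fun h => hside h.symm)
    rw [cutVecOf, if_neg hside]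
    linarith

theorem LPrecoversOf_cutVecOf (hS : n = 2 * #S) (hm : 2 ≤ #S) (hαβ : 2 * α + 2 * β < 1)
    (hcross : ∀ v, (#(crossNbrs S G v) : ℝ) ≤ α * #S)
    (hnon : ∀ v, (#(ownNonNbrs S G v) : ℝ) ≤ β * #S) :
    LPrecoversOf n G (cutVecOf S) := by
  refine ⟨LPfeasible_cutVecOf hS, fun x hx => ?_⟩
  have hgap := sum_sideMass_le_two_mul_LPobj_sub hx hS hm hcross hnon
  have hT := sum_nonneg fun v (_ : v ∈ univ) => sideMass_nonneg (S := S) hx (by omega) v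
  refine ⟨by nlinarith, fun heq i j hij => eq_cutVecOf_of_sum_sideMass_eq_zero hx hS hm ?_ hij⟩
  rw [heq, sub_self, mul_zero] at hgap
  nlinarith

end Bisection

lemma measureReal_card_filter_ge_le {ι : Type*} [Fintype ι] (μ : ι → Measure Bool)
    [∀ i, IsProbabilityMeasure (μ i)] (b : Bool) (s : Finset ι) {t : ℝ} (ht : 0 ≤ t) :
    (Measure.pi μ).real {ω | ∑ i ∈ s, (μ i).real {b} + t ≤ #(s.filter (ω · = b))}
      ≤ exp (-2 * t ^ 2 / #s) := by
  set ind : Bool → ℝ := fun c => if c = b then 1 else 0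
  have hind : Measurable ind := measurable_of_countable ind
  have hmean : ∀ i, (Measure.pi μ)[fun ω => ind (ω i)] = (μ i).real {b} := by
    intro i
    rw [integral_comp_eval hind.aestronglyMeasurable, integral_fintype .of_finite]
    cases b <;> simp [ind]
  have hindep : iIndepFun (fun i ω => ind (ω i) - (μ i).real {b}) (Measure.pi μ) :=
    iIndepFun_pi (X := fun i c => ind c - (μ i).real {b}) (fun i => by fun_prop)
  have hsubG : ∀ i ∈ s, HasSubgaussianMGF (fun ω => ind (ω i) - (μ i).real {b})
      ((‖(1:ℝ) - 0‖₊ / 2) ^ 2) (Measure.pi μ) := by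
    intro i _
    rw [← hmean i]
    refine hasSubgaussianMGF_of_mem_Icc (hind.comp (measurable_pi_apply i)).aemeasurable
      (ae_of_all _ fun ω => ?_)
    by_cases h : ω i = b <;> simp [ind, h]
  have h := HasSubgaussianMGF.measure_sum_ge_le_of_iIndepFun hindep hsubG ht
  convert h using 2
  · ext ω
    simp only [Set.mem_ofPred_eq, sum_sub_distrib, natCast_card_filter, ind]
    constructor <;> intro h <;> linarith
  · simp only [sub_zero, nnnorm_one, sum_const, nsmul_eq_mul]
    push_cast
    ring

section RandomGraph

variable {n : ℕ}

lemma graphOf_adj_iff (ω : Fin n × Fin n → Bool) (i j : Fin n) :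
    (graphOf ω).Adj i j ↔ i ≠ j ∧ ω (min i j, max i j) = true := by
  rw [graphOf, SimpleGraph.fromRel_adj]
  refine and_congr_right fun hij => ?_
  rcases hij.lt_or_gt with h | h
  · simp [h, h.le, h.not_gt]
  · simp [h, h.le, h.not_gt]

lemma pair_min_max_injective (v : Fin n) :
    Function.Injective fun k : Fin n => (min v k, max v k) := by
  intro a b h
  simp only [Prod.mk.injEq] at h
  rcases le_total v a with ha | ha <;> rcases le_total v b with hb | hb <;>
    simp_all

lemma bern_real_true {r : ℝ} (h0 : 0 ≤ r) (h1 : r ≤ 1) : (bern r).real {true} = r := by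
  simp [bern, measureReal_def, PMF.bernoulli_apply, Real.toNNReal_le_one.mpr h1, h0]

lemma bern_real_false {r : ℝ} (h0 : 0 ≤ r) (h1 : r ≤ 1) : (bern r).real {false} = 1 - r := by
  simp [bern, measureReal_def, PMF.bernoulli_apply, Real.toNNReal_le_one.mpr h1, h0]

instance (pe : Fin n × Fin n → ℝ) : IsProbabilityMeasure (graphMeasure n pe) := by
  unfold graphMeasure; infer_instance

lemma graphMeasure_card_filter_gt_le (pe : Fin n × Fin n → ℝ) (v : Fin n) (K : Finset (Fin n))
    (b : Bool) {r ε m : ℝ} (hK : 0 < #K) (hKm : #K ≤ m)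
    (hr : ∀ k ∈ K, (bern (pe (min v k, max v k))).real {b} ≤ r) (hε : 0 ≤ ε) :
    (graphMeasure n pe).real {ω | (r + ε) * m < #(K.filter fun k => ω (min v k, max v k) = b)}
      ≤ exp (-2 * ε ^ 2 * m) := by
  set s := K.image fun k => (min v k, max v k)
  have hcard : #s = #K := card_image_of_injective _ (pair_min_max_injective v)
  have hcount : ∀ ω : Fin n × Fin n → Bool,
      #(K.filter fun k => ω (min v k, max v k) = b) = #(s.filter (ω · = b)) := fun ω => by
    rw [filter_image, card_image_of_injective _ (pair_min_max_injective v)]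
  obtain ⟨k₀, hk₀⟩ := card_pos.mp hK
  have hmean : ∑ c ∈ s, (bern (pe c)).real {b} ≤ r * m := by
    rw [sum_image fun a _ b _ h => pair_min_max_injective v h]
    calc ∑ k ∈ K, (bern (pe (min v k, max v k))).real {b} ≤ ∑ _k ∈ K, r := sum_le_sum hr
      _ = #K * r := by rw [sum_const, nsmul_eq_mul]
      _ ≤ r * m := by
        rw [mul_comm]
        exact mul_le_mul_of_nonneg_left hKm (measureReal_nonneg.trans (hr k₀ hk₀))
  have hK' : (0 : ℝ) < #K := by exact_mod_cast hK
  calc (graphMeasure n pe).real {ω | (r + ε) * m < #(K.filter fun k => ω (min v k, max v k) = b)}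
      ≤ (graphMeasure n pe).real
          {ω | ∑ c ∈ s, (bern (pe c)).real {b} + ε * m ≤ #(s.filter (ω · = b))} := by
        refine measureReal_mono fun ω hω => ?_
        simp only [Set.mem_ofPred_eq, hcount] at hω ⊢
        linarith
    _ ≤ exp (-2 * (ε * m) ^ 2 / #s) :=
        measureReal_card_filter_ge_le _ b s (mul_nonneg hε (hK'.le.trans hKm))
    _ ≤ exp (-2 * ε ^ 2 * m) := by
        rw [hcard, exp_le_exp, div_le_iff₀ hK']
        have : 0 ≤ ε ^ 2 * m := mul_nonneg (sq_nonneg ε) (hK'.le.trans hKm)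
        nlinarith

end RandomGraph

section PlantedBisection

open Bisection

variable {m : ℕ} {p q ε : ℝ}

def lowerHalf (n : ℕ) : Finset (Fin n) := univ.filter fun i => (i : ℕ) < n / 2

lemma card_lowerHalf (m : ℕ) : #(lowerHalf (2 * m)) = m := by
  rw [lowerHalf, Fin.card_filter_val_lt]
  omega

lemma cutVec_eq_cutVecOf_lowerHalf (n : ℕ) : cutVec n = cutVecOf (lowerHalf n) := by
  ext i j
  unfold cutVec cutVecOf
  split_ifs <;> simp_all [sameSide, lowerHalf]

lemma sbmPe_min_max {n : ℕ} {v k : Fin n} (hvk : v ≠ k) :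
    sbmPe n p q (min v k, max v k) =
      if (v ∈ lowerHalf n ↔ k ∈ lowerHalf n) then p else q := by
  rcases hvk.lt_or_gt with h | h
  · simp [sbmPe, sameSide, lowerHalf, h, h.le]
  · simp [sbmPe, sameSide, lowerHalf, h, h.le, Iff.comm]

lemma crossNbrs_graphOf {n : ℕ} (S : Finset (Fin n)) (ω : Fin n × Fin n → Bool) (v : Fin n) :
    crossNbrs S (graphOf ω) v = (otherSide S v).filter fun k => ω (min v k, max v k) = true := by
  refine filter_congr fun k hk => ?_
  rw [graphOf_adj_iff, and_iff_right]
  rintro rfl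
  simp at hk

lemma ownNonNbrs_graphOf {n : ℕ} (S : Finset (Fin n)) (ω : Fin n × Fin n → Bool) (v : Fin n) :
    ownNonNbrs S (graphOf ω) v = (ownSide S v).filter fun k => ω (min v k, max v k) = false := by
  refine filter_congr fun k hk => ?_
  rw [graphOf_adj_iff, and_iff_right (mem_ownSide.mp hk).1.symm, Bool.not_eq_true]

lemma sbm_card_crossNbrs_gt_le (hq0 : 0 ≤ q) (hq1 : q ≤ 1) (hε : 0 ≤ ε) (hm : 1 ≤ m)
    (v : Fin (2 * m)) :
    (graphMeasure (2 * m) (sbmPe (2 * m) p q)).real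
        {ω | (q + ε) * m < #(crossNbrs (lowerHalf (2 * m)) (graphOf ω) v)}
      ≤ exp (-2 * ε ^ 2 * m) := by
  have hS : 2 * m = 2 * #(lowerHalf (2 * m)) := by rw [card_lowerHalf]
  have hcard : #(otherSide (lowerHalf (2 * m)) v) = m := by rw [card_otherSide hS, card_lowerHalf]
  simp only [crossNbrs_graphOf]
  refine graphMeasure_card_filter_gt_le _ v _ true (by omega) (by simp [hcard])
    (fun k hk => ?_) hε
  have hvk : v ≠ k := by rintro rfl; simp at hk
  rw [sbmPe_min_max hvk, if_neg fun h => mem_otherSide.mp hk h.symm, bern_real_true hq0 hq1]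

lemma sbm_card_ownNonNbrs_gt_le (hp0 : 0 ≤ p) (hp1 : p ≤ 1) (hε : 0 ≤ ε) (hm : 2 ≤ m)
    (v : Fin (2 * m)) :
    (graphMeasure (2 * m) (sbmPe (2 * m) p q)).real
        {ω | (1 - p + ε) * m < #(ownNonNbrs (lowerHalf (2 * m)) (graphOf ω) v)}
      ≤ exp (-2 * ε ^ 2 * m) := by
  have hS : 2 * m = 2 * #(lowerHalf (2 * m)) := by rw [card_lowerHalf]
  have hcard : #(ownSide (lowerHalf (2 * m)) v) = m - 1 := by
    rw [card_ownSide hS, card_lowerHalf]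
  simp only [ownNonNbrs_graphOf]
  refine graphMeasure_card_filter_gt_le _ v _ false (by omega)
    (by rw [hcard, Nat.cast_le]; omega) (fun k hk => ?_) hε
  obtain ⟨hkv, hside⟩ := mem_ownSide.mp hk
  rw [sbmPe_min_max hkv.symm, if_pos hside.symm, bern_real_false hp0 hp1]

lemma sbm_prob_LPrecovers_ge (hq0 : 0 ≤ q) (hp1 : p ≤ 1) (hε : 0 ≤ ε)
    (hgap : 2 * (q + ε) + 2 * (1 - p + ε) < 1) (hm : 2 ≤ m) :
    1 - 4 * m * exp (-2 * ε ^ 2 * m) ≤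
      (graphMeasure (2 * m) (sbmPe (2 * m) p q)).real {ω | LPrecovers (2 * m) (graphOf ω)} := by
  set L := lowerHalf (2 * m)
  have hS : 2 * m = 2 * #L := by rw [card_lowerHalf]
  have hbad : {ω | LPrecovers (2 * m) (graphOf ω)}ᶜ ⊆ ⋃ v ∈ (univ : Finset (Fin (2 * m))),
      ({ω | (q + ε) * m < #(crossNbrs L (graphOf ω) v)} ∪
        {ω | (1 - p + ε) * m < #(ownNonNbrs L (graphOf ω) v)}) := by
    intro ω hω
    contrapose! hω
    simp only [Set.mem_iUnion, Set.mem_union, Set.mem_ofPred_eq, not_exists, not_or,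
      not_lt] at hω
    rw [Set.notMem_compl_iff, Set.mem_ofPred_eq, LPrecovers, cutVec_eq_cutVecOf_lowerHalf]
    refine LPrecoversOf_cutVecOf hS (by rw [card_lowerHalf]; exact hm) hgap
      (fun v => ?_) (fun v => ?_)
    · rw [card_lowerHalf]; exact (hω v (mem_univ v)).1
    · rw [card_lowerHalf]; exact (hω v (mem_univ v)).2
  have hprob : (graphMeasure (2 * m) (sbmPe (2 * m) p q)).real
      {ω | LPrecovers (2 * m) (graphOf ω)}ᶜ ≤ 4 * m * exp (-2 * ε ^ 2 * m) :=
    calc _ ≤ ∑ v : Fin (2 * m), (exp (-2 * ε ^ 2 * m) + exp (-2 * ε ^ 2 * m)) :=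
          (measureReal_mono hbad (measure_ne_top _ _)).trans <|
            (measureReal_biUnion_finset_le _ _).trans <| sum_le_sum fun v _ =>
              (measureReal_union_le _ _).trans <| add_le_add
              (sbm_card_crossNbrs_gt_le hq0 (by linarith) hε (by omega) v)
              (sbm_card_ownNonNbrs_gt_le (by linarith) hp1 hε hm v)
      _ = 4 * m * exp (-2 * ε ^ 2 * m) := by
        simp only [sum_const, card_univ, Fintype.card_fin, nsmul_eq_mul, Nat.cast_mul,
          Nat.cast_ofNat]
        ring
  rw [probReal_compl_eq_one_sub (Set.toFinite _).measurableSet] at hprob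
  linarith

lemma tendsto_one_sub_mul_exp {c : ℝ} (hc : 0 < c) :
    Tendsto (fun m : ℕ => 1 - 4 * m * exp (-2 * c * m)) atTop (nhds 1) := by
  have h := (tendsto_self_mul_const_pow_of_lt_one (exp_pos (-2 * c)).le
    (exp_lt_one_iff.mpr (by linarith))).const_mul 4
  rw [mul_zero] at h
  convert (tendsto_const_nhds (x := (1 : ℝ))).sub h using 2 with m
  · rw [mul_comm (-2 * c), exp_nat_mul]; ring
  · simp

end PlantedBisection

theorem sbm_lp_recovery_very_dense_general (p q : ℝ)
    (hq : 0 < q) (hp : p < 1) (hgap : p - q > 1 / 2) :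
    Tendsto (fun m : ℕ =>
      graphMeasure (2 * m) (sbmPe (2 * m) p q)
        {ω | LPrecovers (2 * m) (graphOf ω)})
      atTop (nhds 1) := by
  set ε := (2 * (p - q) - 1) / 8 with hε_def
  have hε : 0 < ε := by rw [hε_def]; linarith
  have hreal : Tendsto (fun m : ℕ => (graphMeasure (2 * m) (sbmPe (2 * m) p q)).real
      {ω | LPrecovers (2 * m) (graphOf ω)}) atTop (nhds 1) :=
    tendsto_of_tendsto_of_tendsto_of_le_of_le' (tendsto_one_sub_mul_exp (pow_pos hε 2))
      tendsto_const_nhds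
      ((eventually_ge_atTop 2).mono fun m hm =>
        sbm_prob_LPrecovers_ge hq.le hp.le hε.le (by rw [hε_def]; linarith) hm)
      (Eventually.of_forall fun m => measureReal_le_one)
  simpa [ofReal_measureReal] using ENNReal.tendsto_ofReal hreal

/-- Let `0 < q < p < 1` be constants with `p - q > 1/2`.  Then,
with high probability (as `n = 2m → ∞` along even `n`), for `G` drawn from the
stochastic block model `𝒢_{n,p,q}` the metric LP relaxation recovers the planted
bisection: the cut vector of the planted bisection is the unique optimal solution
of (LP-P). -/
theorem sbm_lp_recovery_very_dense (p q : ℝ)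
    (hq : 0 < q) (hqp : q < p) (hp : p < 1) (hgap : p - q > 1 / 2) :
    Tendsto (fun m : ℕ =>
      graphMeasure (2 * m) (sbmPe (2 * m) p q)
        {ω | LPrecovers (2 * m) (graphOf ω)})
      atTop (nhds 1) :=
  sbm_lp_recovery_very_dense_general p q hq hp hgap
end
end
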